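/- arXiv:1106.4287 — 5 statements merged into one kernel-verified Lean document; each statement's English description precedes it below -/
import Mathlib

section
/- For every n ≥ 1 and every k ∈ {1,…,n}, the Rawlings major index is Mahonian: the sum over all permutations σ in S_n of q^{rmaj_k(σ)} equals the q-factorial [n]_q! in the polynomial ring ℤ[q]. -/
open scoped Classical

/-- `[m]_q = 1 + q + ⋯ + q^{m-1}` for an element `q` of a semiring. -/
def qIntE {K : Type*} [Semiring K] (q : K) (m : ℕ) : K := ∑ i ∈ Finset.range m, q ^ i

/-- `[m]_q! = [m]_q [m-1]_q ⋯ [1]_q`. -/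
def qFactE {K : Type*} [Semiring K] (q : K) : ℕ → K
  | 0 => 1
  | m + 1 => qFactE q m * qIntE q (m + 1)

/-- The excedance number of a permutation of `{1,…,n}` (0-indexed model on `Fin n`). -/
def exc {n : ℕ} (σ : Equiv.Perm (Fin n)) : ℕ :=
  (Finset.univ.filter fun i : Fin n => (i : ℕ) < (σ i : ℕ)).card

/-- The major index: the sum of the (1-based) descent positions. -/
def maj {n : ℕ} (σ : Equiv.Perm (Fin n)) : ℕ :=
  ∑ j ∈ Finset.range n,
    if h : j + 1 < n then
      (if (σ ⟨j + 1, h⟩ : ℕ) < (σ ⟨j, Nat.lt_of_succ_lt h⟩ : ℕ) then j + 1 else 0)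
    else 0

/-- The descent number. -/
def desNum {n : ℕ} (σ : Equiv.Perm (Fin n)) : ℕ :=
  ∑ j ∈ Finset.range n,
    if h : j + 1 < n then
      (if (σ ⟨j + 1, h⟩ : ℕ) < (σ ⟨j, Nat.lt_of_succ_lt h⟩ : ℕ) then 1 else 0)
    else 0

/-- `maj_{≥k}`: the sum of the (1-based) positions `i` with `σ(i) - σ(i+1) ≥ k`. -/
def majGe {n : ℕ} (k : ℕ) (σ : Equiv.Perm (Fin n)) : ℕ :=
  ∑ j ∈ Finset.range n,
    if h : j + 1 < n then
      (if (σ ⟨j + 1, h⟩ : ℕ) + k ≤ (σ ⟨j, Nat.lt_of_succ_lt h⟩ : ℕ) then j + 1 else 0)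
    else 0

/-- `inv_{<k}`: the number of pairs `i < j` with `0 < σ(i) - σ(j) < k`. -/
def invLt {n : ℕ} (k : ℕ) (σ : Equiv.Perm (Fin n)) : ℕ :=
  (Finset.univ.filter fun p : Fin n × Fin n =>
    p.1 < p.2 ∧ (σ p.2 : ℕ) < (σ p.1 : ℕ) ∧ (σ p.1 : ℕ) < (σ p.2 : ℕ) + k).card

/-- The Rawlings major index `rmaj_k = inv_{<k} + maj_{≥k}`. -/
def rmaj {n : ℕ} (k : ℕ) (σ : Equiv.Perm (Fin n)) : ℕ := invLt k σ + majGe k σ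

namespace RmajAux
open Finset

def insF (n g : ℕ) (f : ℕ → ℕ) : ℕ → ℕ := fun i =>
  if i < g then f i else if i = g then n else f (i - 1)

noncomputable def invN (k n : ℕ) (f : ℕ → ℕ) : ℕ :=
  ∑ j ∈ range n, ∑ i ∈ range j, if f j < f i ∧ f i < f j + k then 1 else 0

noncomputable def majN (k n : ℕ) (f : ℕ → ℕ) : ℕ :=
  ∑ i ∈ range n, if i + 1 < n ∧ f (i + 1) + k ≤ f i then i + 1 else 0

noncomputable def cB (k n : ℕ) (f : ℕ → ℕ) (g : ℕ) : ℕ :=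
  ∑ j ∈ range n, if g ≤ j ∧ n < f j + k then 1 else 0

noncomputable def cD (k n : ℕ) (f : ℕ → ℕ) (g : ℕ) : ℕ :=
  ∑ i ∈ range n, if g ≤ i ∧ i + 1 < n ∧ f (i + 1) + k ≤ f i then 1 else 0

noncomputable def cIns (k n : ℕ) (f : ℕ → ℕ) (g : ℕ) : ℕ :=
  cB k n f g + cD k n f g +
    (if 1 ≤ g ∧ g < n ∧ f g + k ≤ f (g - 1) then 1
     else if g < n ∧ f g + k ≤ n then g + 1 else 0)

lemma insF_lt {n g : ℕ} (f : ℕ → ℕ) {i : ℕ} (h : i < g) : insF n g f i = f i := by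
  simp [insF, h]

lemma insF_self {n g : ℕ} (f : ℕ → ℕ) : insF n g f g = n := by
  simp [insF]

lemma insF_gt {n g : ℕ} (f : ℕ → ℕ) {i : ℕ} (h : g < i) : insF n g f i = f (i - 1) := by
  have h1 : ¬ i < g := by omega
  have h2 : ¬ i = g := by omega
  simp [insF, h1, h2]

lemma insF_succ {n g : ℕ} (f : ℕ → ℕ) {i : ℕ} (h : g ≤ i) : insF n g f (i + 1) = f i := by
  rw [insF_gt f (by omega), Nat.add_sub_cancel]

lemma insF_em {n g : ℕ} (f : ℕ → ℕ) (i : ℕ) :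
    insF n g f (if i < g then i else i + 1) = f i := by
  by_cases h : i < g
  · simp only [if_pos h]; exact insF_lt f h
  · simp only [if_neg h]; exact insF_succ f (by omega)

lemma sum_splice {M : Type*} [AddCommMonoid M] (u : ℕ → M) {g j : ℕ} (hg : g ≤ j) :
    ∑ i ∈ Finset.range (j + 1), u i
      = (∑ i ∈ Finset.range j, u (if i < g then i else i + 1)) + u g := by
  induction j with
  | zero =>
    have : g = 0 := by omega
    subst this; simp
  | succ j ih =>
    by_cases h : g = j + 1
    · subst h
      rw [Finset.sum_range_succ]
      congr 1
      apply Finset.sum_congr rfl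
      intro i hi
      simp only [Finset.mem_range] at hi
      rw [if_pos hi]
    · have hg' : g ≤ j := by omega
      rw [Finset.sum_range_succ, ih hg', Finset.sum_range_succ]
      have : (if j < g then j else j + 1) = j + 1 := by
        rw [if_neg (by omega)]
      rw [this]
      abel

lemma invN_ins {k n g : ℕ} (f : ℕ → ℕ) (hg : g ≤ n) (hf : ∀ i < n, f i < n) :
    invN k (n + 1) (insF n g f) = invN k n f + cB k n f g := by
  unfold invN
  rw [sum_splice (fun j => ∑ i ∈ range j,
    if insF n g f j < insF n g f i ∧ insF n g f i < insF n g f j + k then 1 else 0) hg]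
  have hTg : (∑ i ∈ range g,
      if insF n g f g < insF n g f i ∧ insF n g f i < insF n g f g + k then 1 else 0) = 0 := by
    apply Finset.sum_eq_zero
    intro i hi
    simp only [Finset.mem_range] at hi
    rw [insF_self, insF_lt f hi]
    have := hf i (by omega)
    rw [if_neg (by omega)]
  rw [hTg, add_zero, cB, ← Finset.sum_add_distrib]
  apply Finset.sum_congr rfl
  intro j hj
  simp only [Finset.mem_range] at hj
  have hfj := hf j hj
  by_cases hjg : j < g
  · rw [if_pos hjg, if_neg (by omega), add_zero]
    apply Finset.sum_congr rfl
    intro i hi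
    simp only [Finset.mem_range] at hi
    rw [insF_lt f hjg, insF_lt f (by omega)]
  · rw [if_neg hjg]
    have hgj : g ≤ j := by omega
    rw [sum_splice (fun i =>
      if insF n g f (j+1) < insF n g f i ∧ insF n g f i < insF n g f (j+1) + k then 1 else 0) hgj]
    have hFj1 : insF n g f (j + 1) = f j := insF_succ f hgj
    congr 1
    · apply Finset.sum_congr rfl
      intro i hi
      rw [hFj1, insF_em]
    · rw [hFj1, insF_self]
      split_ifs <;> omega

lemma majN_ins {k n g : ℕ} (f : ℕ → ℕ) (hg : g ≤ n) (hf : ∀ i < n, f i < n) :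
    majN k (n + 1) (insF n g f)
      + (if 1 ≤ g ∧ g < n ∧ f g + k ≤ f (g - 1) then g else 0)
    = majN k n f + cD k n f g + (if g < n ∧ f g + k ≤ n then g + 1 else 0) := by
  unfold majN
  rw [sum_splice (fun i =>
    if i + 1 < n + 1 ∧ insF n g f (i + 1) + k ≤ insF n g f i then i + 1 else 0) hg]
  have hwg : (if g + 1 < n + 1 ∧ insF n g f (g + 1) + k ≤ insF n g f g then g + 1 else 0)
      = (if g < n ∧ f g + k ≤ n then g + 1 else 0) := by
    rw [insF_self, insF_succ f (le_refl g)]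
    split_ifs <;> omega
  rw [hwg]
  have hbrk : (if 1 ≤ g ∧ g < n ∧ f g + k ≤ f (g - 1) then g else 0)
      = ∑ i ∈ range n, (if i + 1 = g ∧ g < n ∧ f g + k ≤ f (g - 1) then g else 0) := by
    by_cases hcase : 1 ≤ g ∧ g < n ∧ f g + k ≤ f (g - 1)
    · rw [if_pos hcase, Finset.sum_eq_single (g - 1)]
      · rw [if_pos ⟨by omega, hcase.2⟩]
      · intro b hb hbne
        rw [if_neg]; intro hc; exact hbne (by omega)
      · intro hc; exact absurd (Finset.mem_range.mpr (by omega)) hc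
    · rw [if_neg hcase]
      symm
      apply Finset.sum_eq_zero
      intro i hi
      simp only [Finset.mem_range] at hi
      rw [if_neg]; intro hc; exact hcase ⟨by omega, hc.2⟩
  rw [add_right_comm, hbrk, cD, ← Finset.sum_add_distrib, ← Finset.sum_add_distrib]
  congr 1
  apply Finset.sum_congr rfl
  intro i hi
  simp only [Finset.mem_range] at hi
  have hfi := hf i hi
  by_cases h1 : i + 1 < g
  · have hem : (if i < g then i else i + 1) = i := if_pos (by omega)
    rw [hem, insF_lt f h1, insF_lt f (by omega)]
    split_ifs <;> omega
  · by_cases h2 : i + 1 = g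
    · subst h2
      have hem : (if i < i + 1 then i else i + 1) = i := if_pos (by omega)
      rw [hem, insF_self, insF_lt f (by omega)]
      have hg1 : i + 1 - 1 = i := by omega
      rw [hg1]
      split_ifs <;> omega
    · have hgi : g ≤ i := by omega
      have hem : (if i < g then i else i + 1) = i + 1 := if_neg (by omega)
      rw [hem, insF_succ f (by omega), insF_succ f hgi]
      have hfi1 : i + 1 < n → f (i + 1) < n := fun h => hf _ h
      split_ifs <;> omega

lemma rmajN_ins {k n g : ℕ} (f : ℕ → ℕ) (hg : g ≤ n) (hf : ∀ i < n, f i < n) :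
    invN k (n + 1) (insF n g f) + majN k (n + 1) (insF n g f)
      = (invN k n f + majN k n f) + cIns k n f g := by
  have h1 := invN_ins (k := k) f hg hf
  have h2 := majN_ins (k := k) f hg hf
  have hD : (1 ≤ g ∧ g < n ∧ f g + k ≤ f (g - 1)) → f g + k ≤ n := by
    intro h
    have : f (g - 1) < n := hf _ (by omega)
    omega
  unfold cIns
  split_ifs with c1 c2
  · have := hD c1
    have hnd : (if g < n ∧ f g + k ≤ n then g + 1 else 0) = g + 1 := if_pos ⟨c1.2.1, this⟩
    rw [hnd] at h2
    rw [if_pos c1] at h2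
    omega
  · rw [if_neg c1, if_pos c2] at h2
    omega
  · rw [if_neg c1, if_neg c2] at h2
    omega


open Finset

variable {k n : ℕ} {f : ℕ → ℕ}

/-- unified event predicate -/
def Ev (k n : ℕ) (f : ℕ → ℕ) (p : ℕ) : Prop :=
  (n < f p + k) ∨ (1 ≤ p ∧ f p + k ≤ f (p - 1))

noncomputable def tI (k n : ℕ) (f : ℕ → ℕ) (a b : ℕ) : ℕ :=
  ∑ p ∈ Finset.Ico a b, if n < f p + k then 1 else 0

noncomputable def dI (k : ℕ) (f : ℕ → ℕ) (a b : ℕ) : ℕ :=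
  ∑ p ∈ Finset.Ico a b, if 1 ≤ p ∧ f p + k ≤ f (p - 1) then 1 else 0

noncomputable def eI (k n : ℕ) (f : ℕ → ℕ) (a b : ℕ) : ℕ :=
  ∑ p ∈ Finset.Ico a b, if Ev k n f p then 1 else 0

lemma ev_not_both (hf : ∀ i < n, f i < n) {p : ℕ} (hp : p < n) :
    ¬((n < f p + k) ∧ (1 ≤ p ∧ f p + k ≤ f (p - 1))) := by
  rintro ⟨h1, h2, h3⟩
  have := hf (p - 1) (by omega)
  omega

lemma eI_eq (hf : ∀ i < n, f i < n) {a b : ℕ} (hb : b ≤ n) :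
    eI k n f a b = tI k n f a b + dI k f a b := by
  unfold eI tI dI
  rw [← Finset.sum_add_distrib]
  apply Finset.sum_congr rfl
  intro p hp
  simp only [Finset.mem_Ico] at hp
  have := ev_not_both (k := k) hf (show p < n by omega)
  unfold Ev
  split_ifs with h1 h2 h3 h4 h5 <;> first | rfl | (exfalso; tauto)

lemma eI_consec {a b c : ℕ} (hab : a ≤ b) (hbc : b ≤ c) :
    eI k n f a c = eI k n f a b + eI k n f b c := by
  unfold eI
  rw [Finset.sum_Ico_consecutive _ hab hbc]

lemma eI_le {a b : ℕ} : eI k n f a b ≤ b - a := by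
  unfold eI
  calc ∑ p ∈ Finset.Ico a b, (if Ev k n f p then 1 else 0)
      ≤ ∑ p ∈ Finset.Ico a b, 1 := by
        apply Finset.sum_le_sum; intro p _; split_ifs <;> omega
    _ = b - a := by simp [Nat.card_Ico]

lemma eI_pos {a b p : ℕ} (hap : a ≤ p) (hpb : p < b) (hp : Ev k n f p) :
    1 ≤ eI k n f a b := by
  unfold eI
  have : (if Ev k n f p then 1 else 0) ≤ ∑ q ∈ Finset.Ico a b, if Ev k n f q then 1 else 0 := by
    apply Finset.single_le_sum (f := fun q => if Ev k n f q then 1 else 0)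
    · intro q _; positivity
    · exact Finset.mem_Ico.mpr ⟨hap, hpb⟩
  rw [if_pos hp] at this
  omega

lemma eI_bot {a b : ℕ} (hab : a < b) (h : ¬ Ev k n f a) :
    eI k n f a b = eI k n f (a + 1) b := by
  unfold eI
  rw [Finset.sum_eq_sum_Ico_succ_bot hab, if_neg h]
  omega

lemma cB_eq (g : ℕ) : cB k n f g = tI k n f g n := by
  unfold cB tI
  rw [Finset.range_eq_Ico]
  rw [← Finset.sum_Ico_consecutive _ (Nat.zero_le (min g n)) (min_le_right g n)]
  have h1 : ∑ j ∈ Finset.Ico 0 (min g n), (if g ≤ j ∧ n < f j + k then 1 else 0) = 0 := by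
    apply Finset.sum_eq_zero
    intro j hj
    simp only [Finset.mem_Ico] at hj
    rw [if_neg (by omega)]
  rw [h1, zero_add]
  by_cases hgn : g ≤ n
  · rw [min_eq_left hgn]
    apply Finset.sum_congr rfl
    intro j hj
    simp only [Finset.mem_Ico] at hj
    split_ifs <;> first | rfl | omega
  · rw [min_eq_right (by omega)]
    have h2 : Finset.Ico g n = ∅ := Finset.Ico_eq_empty (by omega)
    simp [h2]

lemma cD_eq (g : ℕ) : cD k n f g = dI k f (g + 1) n := by
  rcases Nat.eq_zero_or_pos n with h | h
  · subst h; simp [cD, dI]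
  have h1 : cD k n f g = ∑ i ∈ Finset.Ico g (n - 1),
      (if g ≤ i ∧ i + 1 < n ∧ f (i + 1) + k ≤ f i then 1 else 0) := by
    unfold cD
    refine (Finset.sum_subset ?_ ?_).symm
    · intro x hx
      simp only [Finset.mem_Ico, Finset.mem_range] at hx ⊢
      omega
    · intro x hx hnx
      simp only [Finset.mem_Ico, Finset.mem_range] at hx hnx
      rw [if_neg (by omega)]
  have hico : Finset.Ico (g + 1) n = (Finset.Ico g (n - 1)).map (addRightEmbedding 1) := by
    rw [Finset.map_add_right_Ico]
    congr 1 <;> omega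
  rw [h1]
  unfold dI
  rw [hico, Finset.sum_map]
  apply Finset.sum_congr rfl
  intro i hi
  simp only [Finset.mem_Ico] at hi
  simp only [addRightEmbedding_apply]
  simp only [Nat.add_sub_cancel]
  split_ifs <;> first | rfl | omega

/-- value of `cIns` at an event gap -/
lemma cIns_ev (hf : ∀ i < n, f i < n) {g : ℕ} (hg : g < n) (h : Ev k n f g) :
    cIns k n f g = eI k n f g n := by
  have hsplit : eI k n f g n = cB k n f g + (dI k f (g+1) n + (if 1 ≤ g ∧ f g + k ≤ f (g-1) then 1 else 0)) := by
    rw [eI_eq hf (le_refl n), cB_eq]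
    congr 1
    unfold dI
    rw [Finset.sum_eq_sum_Ico_succ_bot (show g < n from hg)]
    omega
  rw [hsplit, ← cD_eq]
  unfold cIns
  rcases h with h | h
  · have hnd : ¬ (1 ≤ g ∧ g < n ∧ f g + k ≤ f (g - 1)) := by
      intro hc
      exact ev_not_both (k := k) hf hg ⟨h, hc.1, hc.2.2⟩
    rw [if_neg hnd, if_neg (by omega)]
    rw [if_neg (by intro hc; exact ev_not_both (k := k) hf hg ⟨h, hc⟩)]
    omega
  · rw [if_pos ⟨h.1, hg, h.2⟩, if_pos h]
    omega

/-- value of `cIns` at a non-event gap -/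
lemma cIns_nev (hf : ∀ i < n, f i < n) {g : ℕ} (hg : g < n) (h : ¬ Ev k n f g) :
    cIns k n f g = eI k n f g n + g + 1 := by
  have hT : ¬ n < f g + k := fun hc => h (Or.inl hc)
  have hD : ¬ (1 ≤ g ∧ f g + k ≤ f (g - 1)) := fun hc => h (Or.inr hc)
  have hsplit : eI k n f g n = cB k n f g + (dI k f (g+1) n + (if 1 ≤ g ∧ f g + k ≤ f (g-1) then 1 else 0)) := by
    rw [eI_eq hf (le_refl n), cB_eq]
    congr 1
    unfold dI
    rw [Finset.sum_eq_sum_Ico_succ_bot (show g < n from hg)]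
    omega
  rw [hsplit, ← cD_eq, if_neg hD]
  unfold cIns
  rw [if_neg (by intro hc; exact hD ⟨hc.1, hc.2.2⟩), if_pos ⟨hg, by omega⟩]
  omega

lemma cIns_last : cIns k n f n = 0 := by
  have h1 : cB k n f n = 0 := by
    apply Finset.sum_eq_zero
    intro i hi
    simp only [Finset.mem_range] at hi
    rw [if_neg (by omega)]
  have h2 : cD k n f n = 0 := by
    apply Finset.sum_eq_zero
    intro i hi
    simp only [Finset.mem_range] at hi
    rw [if_neg (by omega)]
  unfold cIns
  rw [h1, h2, if_neg (by omega), if_neg (by omega)]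

lemma cIns_le (hf : ∀ i < n, f i < n) {g : ℕ} (hg : g ≤ n) : cIns k n f g ≤ n := by
  rcases eq_or_lt_of_le hg with h | h
  · rw [h, cIns_last]; omega
  by_cases he : Ev k n f g
  · rw [cIns_ev hf h he]
    have := eI_le (k := k) (n := n) (f := f) (a := g) (b := n)
    omega
  · rw [cIns_nev hf h he]
    have h2 := eI_bot (k := k) (n := n) (f := f) (b := n) h he
    have := eI_le (k := k) (n := n) (f := f) (a := g + 1) (b := n)
    omega

lemma cIns_injOn (hf : ∀ i < n, f i < n) :
    ∀ g ≤ n, ∀ g' ≤ n, g < g' → cIns k n f g ≠ cIns k n f g' := by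
  intro g hg g' hg' hlt
  -- set M := eI k n f 0 n
  rcases eq_or_lt_of_le hg' with heq | hg'n
  · -- g' = n : value 0; g < n has value ≥ 1
    rw [heq, cIns_last]
    rw [heq] at hlt
    by_cases he : Ev k n f g
    · rw [cIns_ev hf hlt he]
      have := eI_pos (k := k) (n := n) (f := f) (le_refl g) hlt he
      omega
    · rw [cIns_nev hf hlt he]
      omega
  · have hgn : g < n := by omega
    have hM : eI k n f 0 n = eI k n f 0 g + eI k n f g n := eI_consec (by omega) (by omega)
    have hM' : eI k n f 0 n = eI k n f 0 g' + eI k n f g' n := eI_consec (by omega) (by omega)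
    have hsplit : eI k n f g n = eI k n f g g' + eI k n f g' n := eI_consec (by omega) (by omega)
    by_cases he : Ev k n f g <;> by_cases he' : Ev k n f g'
    · -- both events: strictly decreasing
      rw [cIns_ev hf hgn he, cIns_ev hf hg'n he']
      have h1 : 1 ≤ eI k n f g g' := eI_pos (le_refl g) hlt he
      omega
    · -- g event, g' not: g ≤ M < g'
      rw [cIns_ev hf hgn he, cIns_nev hf hg'n he']
      have h1 : eI k n f g n ≤ eI k n f 0 n := by omega
      have h2 : eI k n f 0 g' ≤ g' - 0 := eI_le
      omega
    · -- g not event, g' event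
      rw [cIns_nev hf hgn he, cIns_ev hf hg'n he']
      have h1 : eI k n f g' n ≤ eI k n f 0 n := by omega
      have h2 : eI k n f 0 g ≤ g - 0 := eI_le
      omega
    · -- both non-events: strictly increasing
      rw [cIns_nev hf hgn he, cIns_nev hf hg'n he']
      have h1 : eI k n f g g' = eI k n f (g+1) g' := eI_bot hlt he
      have h2 : eI k n f (g+1) g' ≤ g' - (g+1) := eI_le
      omega

lemma cIns_image (hf : ∀ i < n, f i < n) :
    (Finset.range (n+1)).image (cIns k n f) = Finset.range (n+1) := by
  apply Finset.eq_of_subset_of_card_le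
  · intro x hx
    simp only [Finset.mem_image, Finset.mem_range] at hx ⊢
    obtain ⟨g, hg, rfl⟩ := hx
    have := cIns_le (k := k) hf (show g ≤ n by omega)
    omega
  · rw [Finset.card_image_of_injOn, Finset.card_range]
    intro a ha b hb hab
    simp only [Finset.coe_range, Set.mem_Iio] at ha hb
    by_contra hne
    rcases Nat.lt_or_ge a b with h | h
    · exact cIns_injOn hf a (by omega) b (by omega) h hab
    · exact cIns_injOn hf b (by omega) a (by omega) (by omega) hab.symm


lemma cIns_sum {R : Type*} [CommSemiring R] (q : R) (hf : ∀ i < n, f i < n) :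
    ∑ g ∈ Finset.range (n + 1), q ^ (cIns k n f g) = ∑ j ∈ Finset.range (n + 1), q ^ j := by
  have hinj : ∀ a ∈ Finset.range (n+1), ∀ b ∈ Finset.range (n+1),
      cIns k n f a = cIns k n f b → a = b := by
    intro a ha b hb hab
    simp only [Finset.mem_range] at ha hb
    by_contra hne
    rcases Nat.lt_or_ge a b with h | h
    · exact cIns_injOn hf a (by omega) b (by omega) h hab
    · exact cIns_injOn hf b (by omega) a (by omega) (by omega) hab.symm
  conv_rhs => rw [← cIns_image (k := k) hf]
  rw [Finset.sum_image hinj]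

end RmajAux


namespace RmajAux
open Finset Equiv

variable {n k : ℕ}

/-- the word of a permutation, as a function on ℕ -/
def fSig {n : ℕ} (σ : Equiv.Perm (Fin n)) : ℕ → ℕ := fun i =>
  if h : i < n then (σ ⟨i, h⟩ : ℕ) else n

lemma fSig_lt {σ : Equiv.Perm (Fin n)} {i : ℕ} (h : i < n) : fSig σ i < n := by
  rw [fSig, dif_pos h]
  exact (σ ⟨i, h⟩).isLt

lemma fSig_eq {σ : Equiv.Perm (Fin n)} {i : ℕ} (h : i < n) :
    fSig σ i = (σ ⟨i, h⟩ : ℕ) := dif_pos h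

lemma fSig_ge {σ : Equiv.Perm (Fin n)} {i : ℕ} (h : ¬ i < n) : fSig σ i = n := dif_neg h

lemma invN_congr {f f' : ℕ → ℕ} (h : ∀ i < n, f i = f' i) :
    invN k n f = invN k n f' := by
  unfold invN
  apply Finset.sum_congr rfl
  intro j hj
  simp only [Finset.mem_range] at hj
  apply Finset.sum_congr rfl
  intro i hi
  simp only [Finset.mem_range] at hi
  rw [h i (by omega), h j hj]

lemma majN_congr {f f' : ℕ → ℕ} (h : ∀ i < n, f i = f' i) :
    majN k n f = majN k n f' := by
  unfold majN
  apply Finset.sum_congr rfl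
  intro i hi
  simp only [Finset.mem_range] at hi
  by_cases h1 : i + 1 < n
  · rw [h i hi, h (i+1) h1]
  · rw [if_neg (by omega), if_neg (by omega)]

lemma invLt_eq (σ : Equiv.Perm (Fin n)) : invLt k σ = invN k n (fSig σ) := by
  rw [invLt, Finset.card_filter, Fintype.sum_prod_type]
  have step1 : ∀ i j : Fin n,
      (if i < j ∧ (σ j : ℕ) < (σ i : ℕ) ∧ (σ i : ℕ) < (σ j : ℕ) + k then 1 else 0)
      = (if (i:ℕ) < (j:ℕ) ∧ fSig σ (j:ℕ) < fSig σ (i:ℕ) ∧ fSig σ (i:ℕ) < fSig σ (j:ℕ) + k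
          then 1 else 0) := by
    intro i j
    have hi : fSig σ (i:ℕ) = (σ i : ℕ) := by rw [fSig_eq i.isLt]
    have hj : fSig σ (j:ℕ) = (σ j : ℕ) := by rw [fSig_eq j.isLt]
    rw [hi, hj]
    simp only [Fin.lt_def]
  simp only [step1]
  rw [Fin.sum_univ_eq_sum_range (fun i => ∑ j : Fin n,
    if i < (j:ℕ) ∧ fSig σ (j:ℕ) < fSig σ i ∧ fSig σ i < fSig σ (j:ℕ) + k then 1 else 0) n]
  have step2 : ∀ i : ℕ, (∑ j : Fin n,
      if i < (j:ℕ) ∧ fSig σ (j:ℕ) < fSig σ i ∧ fSig σ i < fSig σ (j:ℕ) + k then 1 else 0)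
      = ∑ j ∈ Finset.range n,
      if i < j ∧ fSig σ j < fSig σ i ∧ fSig σ i < fSig σ j + k then 1 else 0 := by
    intro i
    exact Fin.sum_univ_eq_sum_range
      (fun j => if i < j ∧ fSig σ j < fSig σ i ∧ fSig σ i < fSig σ j + k then 1 else 0) n
  simp only [step2]
  rw [invN, Finset.sum_comm]
  apply Finset.sum_congr rfl
  intro j hj
  simp only [Finset.mem_range] at hj
  rw [show Finset.range n = Finset.range j ∪ (Finset.range n \ Finset.range j) by
    rw [Finset.union_sdiff_of_subset (Finset.range_subset_range.mpr (by omega))]]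
  rw [Finset.sum_union (Finset.disjoint_sdiff)]
  have hz : ∑ i ∈ Finset.range n \ Finset.range j,
      (if i < j ∧ fSig σ j < fSig σ i ∧ fSig σ i < fSig σ j + k then 1 else 0) = 0 := by
    apply Finset.sum_eq_zero
    intro i hi
    simp only [Finset.mem_sdiff, Finset.mem_range] at hi
    rw [if_neg (by omega)]
  rw [hz, add_zero]
  apply Finset.sum_congr rfl
  intro i hi
  simp only [Finset.mem_range] at hi
  split_ifs <;> first | rfl | omega

lemma majGe_eq (σ : Equiv.Perm (Fin n)) : majGe k σ = majN k n (fSig σ) := by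
  unfold majGe majN
  apply Finset.sum_congr rfl
  intro j hj
  simp only [Finset.mem_range] at hj
  by_cases h : j + 1 < n
  · rw [dif_pos h]
    have h1 : fSig σ (j+1) = (σ ⟨j+1, h⟩ : ℕ) := fSig_eq h
    have h2 : fSig σ j = (σ ⟨j, Nat.lt_of_succ_lt h⟩ : ℕ) := fSig_eq hj
    rw [h1, h2]
    split_ifs with a b b <;> first | rfl | omega
  · rw [dif_neg h, if_neg (by omega)]

def rhoFun (n : ℕ) (g : ℕ) (i : Fin (n+1)) : Fin (n+1) :=
  if (i:ℕ) < g then i else if (i:ℕ) = g then Fin.last n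
  else ⟨(i:ℕ) - 1, by have := i.isLt; omega⟩

def rhoInv (n : ℕ) (g : Fin (n+1)) (j : Fin (n+1)) : Fin (n+1) :=
  if (j:ℕ) < (g:ℕ) then j else if h : (j:ℕ) = n then g
  else ⟨(j:ℕ) + 1, by have := j.isLt; omega⟩

lemma rhoFun_lt {n g : ℕ} {i : Fin (n+1)} (h : (i:ℕ) < g) : rhoFun n g i = i :=
  if_pos h

lemma rhoFun_eq {n g : ℕ} {i : Fin (n+1)} (h : (i:ℕ) = g) : rhoFun n g i = Fin.last n := by
  rw [rhoFun, if_neg (by omega), if_pos h]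

lemma rhoFun_gt {n g : ℕ} {i : Fin (n+1)} (h : g < (i:ℕ)) :
    rhoFun n g i = ⟨(i:ℕ) - 1, by have := i.isLt; omega⟩ := by
  rw [rhoFun, if_neg (by omega), if_neg (by omega)]

lemma rhoInv_lt {n : ℕ} {g j : Fin (n+1)} (h : (j:ℕ) < (g:ℕ)) : rhoInv n g j = j :=
  if_pos h

lemma rhoInv_last {n : ℕ} {g j : Fin (n+1)} (h : (j:ℕ) = n) : rhoInv n g j = g := by
  have hg : (g:ℕ) ≤ n := by have := g.isLt; omega
  rw [rhoInv, if_neg (by omega), dif_pos h]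

lemma rhoInv_mid {n : ℕ} {g j : Fin (n+1)} (h1 : ¬ (j:ℕ) < (g:ℕ)) (h2 : (j:ℕ) ≠ n) :
    rhoInv n g j = ⟨(j:ℕ) + 1, by have := j.isLt; omega⟩ := by
  rw [rhoInv, if_neg h1, dif_neg h2]

def rho {n : ℕ} (g : Fin (n+1)) : Equiv.Perm (Fin (n+1)) where
  toFun := rhoFun n (g:ℕ)
  invFun := rhoInv n g
  left_inv := by
    intro i
    have hi := i.isLt
    have hg : (g:ℕ) ≤ n := by have := g.isLt; omega
    rcases lt_trichotomy ((i:ℕ)) ((g:ℕ)) with h | h | h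
    · rw [rhoFun_lt h, rhoInv_lt h]
    · rw [rhoFun_eq h, rhoInv_last (by simp), Fin.ext_iff, h]
    · rw [rhoFun_gt h, rhoInv_mid (by simp; omega) (by simp; omega)]
      apply Fin.ext
      simp
      omega
  right_inv := by
    intro j
    have hj := j.isLt
    have hg : (g:ℕ) ≤ n := by have := g.isLt; omega
    by_cases h1 : (j:ℕ) < (g:ℕ)
    · rw [rhoInv_lt h1, rhoFun_lt h1]
    · by_cases h2 : (j:ℕ) = n
      · rw [rhoInv_last h2, rhoFun_eq rfl, Fin.ext_iff]
        simp [h2]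
      · rw [rhoInv_mid h1 h2, rhoFun_gt (by simp; omega)]
        apply Fin.ext
        simp

lemma rho_val_lt {n : ℕ} {g i : Fin (n+1)} (h : (i:ℕ) < (g:ℕ)) : rho g i = i :=
  rhoFun_lt h

lemma rho_val_eq {n : ℕ} {g i : Fin (n+1)} (h : (i:ℕ) = (g:ℕ)) : rho g i = Fin.last n :=
  rhoFun_eq h

lemma rho_val_gt {n : ℕ} {g i : Fin (n+1)} (h : (g:ℕ) < (i:ℕ)) :
    rho g i = ⟨(i:ℕ) - 1, by have := i.isLt; omega⟩ :=
  rhoFun_gt h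

def extPerm {n : ℕ} (σ : Equiv.Perm (Fin n)) : Equiv.Perm (Fin (n+1)) where
  toFun i := if h : (i:ℕ) < n then (σ ⟨i, h⟩).castSucc else Fin.last n
  invFun i := if h : (i:ℕ) < n then (σ.symm ⟨i, h⟩).castSucc else Fin.last n
  left_inv := by
    intro i
    dsimp only
    by_cases h : (i:ℕ) < n
    · rw [dif_pos h]
      have hc : ((σ ⟨(i:ℕ), h⟩).castSucc : ℕ) < n := by
        simp only [Fin.coe_castSucc]
        exact (σ ⟨(i:ℕ), h⟩).isLt
      rw [dif_pos hc]
      have he : (⟨((σ ⟨(i:ℕ), h⟩).castSucc : ℕ), hc⟩ : Fin n) = σ ⟨(i:ℕ), h⟩ := by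
        apply Fin.ext; simp
      rw [he, Equiv.symm_apply_apply]
      apply Fin.ext; simp
    · rw [dif_neg h, dif_neg (by simp)]
      have := i.isLt
      apply Fin.ext
      simp
      omega
  right_inv := by
    intro i
    dsimp only
    by_cases h : (i:ℕ) < n
    · rw [dif_pos h]
      have hc : ((σ.symm ⟨(i:ℕ), h⟩).castSucc : ℕ) < n := by
        simp only [Fin.coe_castSucc]
        exact (σ.symm ⟨(i:ℕ), h⟩).isLt
      rw [dif_pos hc]
      have he : (⟨((σ.symm ⟨(i:ℕ), h⟩).castSucc : ℕ), hc⟩ : Fin n) = σ.symm ⟨(i:ℕ), h⟩ := by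
        apply Fin.ext; simp
      rw [he, Equiv.apply_symm_apply]
      apply Fin.ext; simp
    · rw [dif_neg h, dif_neg (by simp)]
      have := i.isLt
      apply Fin.ext
      simp
      omega

lemma extPerm_val {n : ℕ} (σ : Equiv.Perm (Fin n)) (i : Fin (n+1)) :
    ((extPerm σ) i : ℕ) = fSig σ (i:ℕ) := by
  show ((if h : (i:ℕ) < n then (σ ⟨i, h⟩).castSucc else Fin.last n : Fin (n+1)) : ℕ) = _
  by_cases h : (i:ℕ) < n
  · rw [dif_pos h, fSig_eq h]
    simp
  · rw [dif_neg h, fSig_ge h]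
    simp

def insPerm (σ : Equiv.Perm (Fin n)) (g : Fin (n+1)) : Equiv.Perm (Fin (n+1)) :=
  (rho g).trans (extPerm σ)

lemma insPerm_val {n : ℕ} (σ : Equiv.Perm (Fin n)) (g : Fin (n+1)) (i : Fin (n+1)) :
    ((insPerm σ g) i : ℕ) = insF n (g:ℕ) (fSig σ) (i:ℕ) := by
  have hg : (g:ℕ) ≤ n := by have := g.isLt; omega
  have hi := i.isLt
  show ((extPerm σ) ((rho g) i) : ℕ) = _
  rcases lt_trichotomy ((i:ℕ)) ((g:ℕ)) with h | h | h
  · rw [insF_lt _ h, rho_val_lt h, extPerm_val]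
  · rw [show (i:ℕ) = (g:ℕ) from h, insF_self, rho_val_eq h, extPerm_val,
      fSig_ge (by simp)]
  · rw [insF_gt _ h, rho_val_gt h, extPerm_val]

lemma insPerm_rmaj (σ : Equiv.Perm (Fin n)) (g : Fin (n+1)) :
    rmaj k (insPerm σ g) = rmaj k σ + cIns k n (fSig σ) (g:ℕ) := by
  have hg : (g:ℕ) ≤ n := by have := g.isLt; omega
  have hf : ∀ i < n, fSig σ i < n := fun i hi => fSig_lt hi
  have hagree : ∀ i < n + 1, fSig (insPerm σ g) i = insF n (g:ℕ) (fSig σ) i := by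
    intro i hi
    rw [fSig_eq hi]
    have := insPerm_val σ g ⟨i, hi⟩
    simpa using this
  unfold rmaj
  rw [invLt_eq, majGe_eq, invLt_eq, majGe_eq]
  rw [invN_congr hagree, majN_congr hagree]
  have := rmajN_ins (k := k) (fSig σ) hg hf
  omega

lemma insPerm_injective :
    Function.Injective (fun p : Equiv.Perm (Fin n) × Fin (n+1) => insPerm p.1 p.2) := by
  rintro ⟨σ, g⟩ ⟨σ', g'⟩ heq
  simp only at heq
  have hvals : ∀ i : Fin (n+1),
      insF n (g:ℕ) (fSig σ) (i:ℕ) = insF n (g':ℕ) (fSig σ') (i:ℕ) := by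
    intro i
    rw [← insPerm_val, ← insPerm_val, heq]
  have hgg : g = g' := by
    by_contra hne
    have h1 := hvals g
    have h2 := hvals g'
    rw [insF_self] at h1
    rw [insF_self] at h2
    rcases Nat.lt_or_ge ((g:ℕ)) ((g':ℕ)) with h | h
    · rw [insF_lt _ h] at h1
      have := fSig_lt (σ := σ') (show (g:ℕ) < n by have := g'.isLt; omega)
      omega
    · have h' : (g':ℕ) < (g:ℕ) := by
        rcases Nat.lt_or_ge ((g':ℕ)) ((g:ℕ)) with hx | hx
        · exact hx
        · exact absurd (Fin.ext (by omega)) hne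
      rw [insF_lt _ h'] at h2
      have := fSig_lt (σ := σ) (show (g':ℕ) < n by have := g.isLt; omega)
      omega
  subst hgg
  have hσ : σ = σ' := by
    apply Equiv.ext
    intro x
    have hx := x.isLt
    have h := hvals (if (x:ℕ) < (g:ℕ) then x.castSucc else x.succ)
    have hcoe : (((if (x:ℕ) < (g:ℕ) then x.castSucc else x.succ) : Fin (n+1)) : ℕ)
        = (if (x:ℕ) < (g:ℕ) then (x:ℕ) else (x:ℕ) + 1) := by
      split_ifs <;> simp
    rw [hcoe, insF_em, insF_em] at h
    rw [fSig_eq hx, fSig_eq hx] at h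
    exact Fin.ext h
  rw [hσ]

lemma insPerm_bijective :
    Function.Bijective (fun p : Equiv.Perm (Fin n) × Fin (n+1) => insPerm p.1 p.2) := by
  rw [Fintype.bijective_iff_injective_and_card]
  refine ⟨insPerm_injective, ?_⟩
  simp [Fintype.card_perm, Fintype.card_prod, Fintype.card_fin, Nat.factorial_succ]
  ring

lemma key (k : ℕ) : ∀ n : ℕ,
    ∑ σ : Equiv.Perm (Fin n), (Polynomial.X : Polynomial ℤ) ^ rmaj k σ
      = qFactE (Polynomial.X : Polynomial ℤ) n := by
  intro n
  induction n with
  | zero =>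
    have h0 : ∀ σ : Equiv.Perm (Fin 0), rmaj k σ = 0 := by
      intro σ
      simp [rmaj, invLt, majGe]
    simp only [h0, pow_zero]
    rw [Finset.sum_const, Finset.card_univ]
    simp [qFactE]
  | succ n ih =>
    have hbij := insPerm_bijective (n := n)
    rw [← hbij.sum_comp (fun τ => (Polynomial.X : Polynomial ℤ) ^ rmaj k τ)]
    rw [Fintype.sum_prod_type]
    have hterm : ∀ (σ : Equiv.Perm (Fin n)) (g : Fin (n+1)),
        (Polynomial.X : Polynomial ℤ) ^ rmaj k (insPerm σ g)
          = (Polynomial.X : Polynomial ℤ) ^ rmaj k σ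
            * (Polynomial.X : Polynomial ℤ) ^ cIns k n (fSig σ) (g:ℕ) := by
      intro σ g
      rw [insPerm_rmaj, pow_add]
    have hinner : ∀ σ : Equiv.Perm (Fin n),
        ∑ g : Fin (n+1), (Polynomial.X : Polynomial ℤ) ^ cIns k n (fSig σ) (g:ℕ)
          = qIntE (Polynomial.X : Polynomial ℤ) (n+1) := by
      intro σ
      rw [Fin.sum_univ_eq_sum_range (fun g => (Polynomial.X : Polynomial ℤ) ^ cIns k n (fSig σ) g) (n+1)]
      rw [cIns_sum (k := k) (Polynomial.X : Polynomial ℤ) (fun i hi => fSig_lt hi)]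
      rfl
    calc ∑ σ : Equiv.Perm (Fin n), ∑ g : Fin (n+1),
          (Polynomial.X : Polynomial ℤ) ^ rmaj k (insPerm σ g)
        = ∑ σ : Equiv.Perm (Fin n), (Polynomial.X : Polynomial ℤ) ^ rmaj k σ
            * qIntE (Polynomial.X : Polynomial ℤ) (n+1) := by
          apply Finset.sum_congr rfl
          intro σ _
          rw [← hinner σ, Finset.mul_sum]
          apply Finset.sum_congr rfl
          intro g _
          exact hterm σ g
      _ = qFactE (Polynomial.X : Polynomial ℤ) (n+1) := by
          rw [← Finset.sum_mul, ih]
          rfl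

end RmajAux

/-- the Rawlings major index `rmaj_k` is Mahonian for every `1 ≤ k ≤ n`:
`∑_{σ ∈ S_n} q^{rmaj_k(σ)} = [n]_q!` in `ℤ[q]`. -/
theorem rmaj_is_mahonian (n k : ℕ) (hn : 1 ≤ n) (hk : 1 ≤ k) (hkn : k ≤ n) :
    ∑ σ : Equiv.Perm (Fin n), (Polynomial.X : Polynomial ℤ) ^ rmaj k σ =
      qFactE (Polynomial.X : Polynomial ℤ) n := by
  exact RmajAux.key k n
end

section
/- Fix N ≥ 1 and let e_m denote the elementary symmetric polynomial of degree m in x_1,…,x_N, and set E(z) = Σ_{m≥0} e_m z^m (a polynomial in z of degree N) regarded in ℤ[x_1,…,x_N][t][[z]]. Then (E(tz) − t·E(z)) · (Σ_{n≥0} Σ_{j≥0} Y_{n,j}(x_1,…,x_N) t^j z^n) = (1−t)·E(z), where E(tz) = Σ_{m≥0} e_m t^m z^m and Y_{0,0}=1. (This is the N-variable truncation of the Smirnov word generating function identity Σ Y_{n,j} t^j z^n = (1−t)E(z)/(E(zt)−tE(z)).) -/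
open scoped Classical

/-- The descent number of a word `w : Fin n → Fin N`. -/
def desW {N n : ℕ} (w : Fin n → Fin N) : ℕ :=
  ∑ j ∈ Finset.range n,
    if h : j + 1 < n then
      (if (w ⟨j + 1, h⟩ : ℕ) < (w ⟨j, Nat.lt_of_succ_lt h⟩ : ℕ) then 1 else 0)
    else 0

/-- The Smirnov enumerator `Y_{n,j}(x_1,…,x_N)`: the sum of `x_{w(1)}⋯x_{w(n)}` over
all words of length `n` over `[N]` with no equal adjacent letters and `j` descents. -/
noncomputable def smirnovY (N n j : ℕ) : MvPolynomial (Fin N) ℤ :=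
  ∑ w ∈ Finset.univ.filter (fun w : Fin n → Fin N =>
      (∀ i : ℕ, ∀ h : i + 1 < n, w ⟨i + 1, h⟩ ≠ w ⟨i, Nat.lt_of_succ_lt h⟩) ∧ desW w = j),
    ∏ i, MvPolynomial.X (w i)

/-- `E(z) = ∑_{m≥0} e_m z^m`, a power series in `z` over `ℤ[x_1,…,x_N][t]`. -/
noncomputable def Eser (N : ℕ) : PowerSeries (Polynomial (MvPolynomial (Fin N) ℤ)) :=
  PowerSeries.mk fun m => Polynomial.C (MvPolynomial.esymm (Fin N) ℤ m)

/-- `E(tz) = ∑_{m≥0} e_m t^m z^m`. -/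
noncomputable def Esert (N : ℕ) : PowerSeries (Polynomial (MvPolynomial (Fin N) ℤ)) :=
  PowerSeries.mk fun m => Polynomial.C (MvPolynomial.esymm (Fin N) ℤ m) * Polynomial.X ^ m

/-- The variable `t`, as a constant power series in `z`. -/
noncomputable def tConst (N : ℕ) : PowerSeries (Polynomial (MvPolynomial (Fin N) ℤ)) :=
  PowerSeries.C (R := Polynomial (MvPolynomial (Fin N) ℤ)) Polynomial.X

/-!
Let `F i` be the generating function, weighted by `x^w t^des(w) z^len(w)`, of the nonempty
Smirnov words starting with the letter `i`. Removing the first letter gives the linear system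
`F i = z x_i (1 + t ∑_{j<i} F j + ∑_{j>i} F j)`. With `P k = 1 + x_k z`, `Q k = 1 + t x_k z`
and `D = E(tz) - t E(z) = ∏ Q - t ∏ P`, the series `G i = (P i - Q i) ∏_{k<i} Q k ∏_{k>i} P k`
solve the same system with `1` replaced by `D`, because the partial sums of `G` telescope. The constant term `1 - t` of `D` is
not a unit, so instead of dividing by `D` we use that the system has at most one solution (the
factor `z` makes every coefficient determined by lower ones): hence `D F i = G i`, and summing over
`i` telescopes to `D (Y - 1) = ∏ P - ∏ Q = E(z) - E(tz)`.
-/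

open Finset PowerSeries

section OrderedProducts

variable {ι M S : Type*} [Fintype ι] [LinearOrder ι] [CommMonoid M] [CommRing S]

@[to_additive]
theorem Finset.prod_univ_eq_prod_lt_mul_mul_prod_gt (h : ι → M) (i : ι) :
    ∏ k, h k = (∏ k with k < i, h k) * h i * ∏ k with i < k, h k := by
  have hge : univ.filter (¬· < i) = insert i (univ.filter (i < ·)) := by
    ext k
    simp [le_iff_eq_or_lt, eq_comm]
  rw [← prod_filter_mul_prod_filter_not univ (· < i), hge, prod_insert (by simp), mul_assoc]

theorem Finset.prod_ite_eq_prod_lt_mul_mul_prod_gt {p : ι → Prop} [DecidablePred p]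
    (f g : ι → M) (i : ι) (hlt : ∀ k < i, p k) (hgt : ∀ k, i < k → ¬p k) :
    ∏ k, (if p k then g k else f k) =
      (∏ k with k < i, g k) * (if p i then g i else f i) * ∏ k with i < k, f k := by
  rw [prod_univ_eq_prod_lt_mul_mul_prod_gt (fun k => if p k then g k else f k) i]
  refine congr_arg₂ (· * ·) (congr_arg₂ (· * ·) ?_ rfl) ?_
  · exact prod_congr rfl fun k hk => if_pos (hlt k (mem_filter.1 hk).2)
  · exact prod_congr rfl fun k hk => if_neg (hgt k (mem_filter.1 hk).2)

def orderedDiffTerm (P Q : ι → S) (j : ι) : S :=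
  (P j - Q j) * (∏ k with k < j, Q k) * ∏ k with j < k, P k

theorem sum_filter_orderedDiffTerm {p : ι → Prop} [DecidablePred p]
    (hp : ∀ j k, k < j → p j → p k) (P Q : ι → S) :
    ∑ j with p j, orderedDiffTerm P Q j = ∏ k, P k - ∏ k, if p k then Q k else P k := by
  have h := prod_sub_ordered univ P fun k => if p k then P k - Q k else 0
  have hPQ : ∀ k, P k - (if p k then P k - Q k else 0) = if p k then Q k else P k := by
    intro k
    split_ifs <;> ring
  simp only [hPQ] at h
  rw [h, sub_sub_cancel, sum_filter]
  refine sum_congr rfl fun j _ => ?_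
  split_ifs with hj
  · rw [orderedDiffTerm]
    congr 2
    exact prod_congr rfl fun k hk => (if_pos (hp j k (mem_filter.1 hk).2 hj)).symm
  · simp

theorem sum_orderedDiffTerm (P Q : ι → S) :
    ∑ j, orderedDiffTerm P Q j = ∏ k, P k - ∏ k, Q k := by
  simpa using sum_filter_orderedDiffTerm (p := fun _ => True) (by simp) P Q

theorem sum_lt_orderedDiffTerm (P Q : ι → S) (i : ι) :
    ∑ j with j < i, orderedDiffTerm P Q j =
      ∏ k, P k - (∏ k with k < i, Q k) * P i * ∏ k with i < k, P k := by
  rw [sum_filter_orderedDiffTerm (fun j k hkj hj => hkj.trans hj),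
    prod_ite_eq_prod_lt_mul_mul_prod_gt P Q i (fun _ h => h) (fun _ h => h.not_gt),
    if_neg (lt_irrefl i)]

theorem sum_gt_orderedDiffTerm (P Q : ι → S) (i : ι) :
    ∑ j with i < j, orderedDiffTerm P Q j =
      (∏ k with k < i, Q k) * Q i * (∏ k with i < k, P k) - ∏ k, Q k := by
  have hle : ∑ j with j ≤ i, orderedDiffTerm P Q j =
      ∏ k, P k - (∏ k with k < i, Q k) * Q i * ∏ k with i < k, P k := by
    rw [sum_filter_orderedDiffTerm (fun j k hkj hj => hkj.le.trans hj),
      prod_ite_eq_prod_lt_mul_mul_prod_gt P Q i (fun _ h => h.le) (fun _ h => h.not_ge),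
      if_pos le_rfl]
  have hsplit := sum_filter_add_sum_filter_not univ (· ≤ i) (orderedDiffTerm P Q)
  simp only [not_le] at hsplit
  linear_combination hsplit - hle + sum_orderedDiffTerm P Q

end OrderedProducts

theorem Fintype.sum_fun_fin_succ {α M : Type*} [Fintype α] [AddCommMonoid M] {n : ℕ}
    (f : (Fin (n + 1) → α) → M) :
    ∑ w, f w = ∑ a, ∑ v : Fin n → α, f (Fin.cons a v) := by
  rw [← (Fin.consEquiv fun _ => α).sum_comp, Fintype.sum_prod_type]
  rfl

namespace PowerSeries

variable {R : Type*} [CommRing R]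

theorem eq_zero_of_forall_eq_X_mul {ι : Type*}
    (L : ι → (ι → R⟦X⟧) →ₗ[R⟦X⟧] R⟦X⟧) {w : ι → R⟦X⟧} (hw : ∀ i, w i = X * L i w) : w = 0 := by
  have hdvd : ∀ n i, X ^ n ∣ w i := by
    intro n
    induction n with
    | zero => simp
    | succ n ih =>
      choose v hv using ih
      have hwv : w = (X : R⟦X⟧) ^ n • v :=
        funext fun i => by rw [hv i, Pi.smul_apply, smul_eq_mul]
      intro i
      rw [hw i, hwv, map_smul, smul_eq_mul]
      exact ⟨L i v, by ring⟩
  funext i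
  ext m
  simpa using X_pow_dvd_iff.1 (hdvd (m + 1) i) m (by omega)

theorem coeff_prod_one_add_C_mul_X {ι : Type*} [Fintype ι] (c : ι → R) (m : ℕ) :
    coeff m (∏ i, (1 + C (c i) * X)) = ∑ s ∈ powersetCard m univ, ∏ i ∈ s, c i := by
  classical
  simp_rw [prod_one_add, map_sum, prod_mul_distrib, ← map_prod, prod_const, coeff_C_mul_X_pow,
    powersetCard_eq_filter, sum_filter, eq_comm]

theorem rescale_prod_one_add_C_mul_X {ι : Type*} [Fintype ι] (t : R) (c : ι → R) :
    rescale t (∏ i, (1 + C (c i) * X)) = ∏ i, (1 + C t * C (c i) * X) := by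
  have hC : ∀ r, rescale t (C r) = C r := fun r => by ext (_ | n) <;> simp [coeff_C]
  rw [map_prod]
  refine prod_congr rfl fun i _ => ?_
  rw [map_add, map_one, map_mul, hC, rescale_X]
  ring

section SmirnovSystem

variable {ι : Type*} [Fintype ι] [LinearOrder ι]

def IsSmirnovSystem (t : R) (a : ι → R) (b : R⟦X⟧) (F : ι → R⟦X⟧) : Prop :=
  ∀ i, F i = X * C (a i) * (b + C t * ∑ j with j < i, F j + ∑ j with i < j, F j)

variable {t : R} {a : ι → R} {b : R⟦X⟧} {F G : ι → R⟦X⟧}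

theorem IsSmirnovSystem.const_mul (hF : IsSmirnovSystem t a b F) (c : R⟦X⟧) :
    IsSmirnovSystem t a (c * b) fun i => c * F i := by
  intro i
  dsimp only
  rw [hF i, ← mul_sum, ← mul_sum]
  ring

theorem IsSmirnovSystem.unique (hF : IsSmirnovSystem t a b F) (hG : IsSmirnovSystem t a b G) :
    F = G := by
  let L : ι → (ι → R⟦X⟧) →ₗ[R⟦X⟧] R⟦X⟧ := fun i =>
    C (a i) • (C t • ∑ j with j < i, LinearMap.proj j + ∑ j with i < j, LinearMap.proj j)
  have h := eq_zero_of_forall_eq_X_mul L (w := F - G) fun i => by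
    simp only [L, Pi.sub_apply, LinearMap.smul_apply, LinearMap.add_apply, LinearMap.sum_apply,
      LinearMap.proj_apply, smul_eq_mul, sum_sub_distrib]
    linear_combination hF i - hG i
  exact sub_eq_zero.1 h

theorem isSmirnovSystem_orderedDiffTerm (t : R) (a : ι → R) :
    IsSmirnovSystem t a (∏ k, (1 + C t * C (a k) * X) - C t * ∏ k, (1 + C (a k) * X))
      (orderedDiffTerm (fun k => 1 + C (a k) * X) (fun k => 1 + C t * C (a k) * X)) := by
  intro i
  rw [sum_lt_orderedDiffTerm, sum_gt_orderedDiffTerm, orderedDiffTerm]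
  ring

theorem IsSmirnovSystem.mul_one_add_sum (hF : IsSmirnovSystem t a 1 F) :
    (rescale t (∏ i, (1 + C (a i) * X)) - C t * ∏ i, (1 + C (a i) * X)) * (1 + ∑ i, F i) =
      (1 - C t) * ∏ i, (1 + C (a i) * X) := by
  rw [rescale_prod_one_add_C_mul_X]
  have hDF := (hF.const_mul _).unique (by simpa using isSmirnovSystem_orderedDiffTerm t a)
  rw [mul_add, mul_one, mul_sum, sum_congr rfl fun i _ => congr_fun hDF i, sum_orderedDiffTerm]
  ring

end SmirnovSystem

end PowerSeries

section SmirnovWords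

variable {N : ℕ}

def IsSmirnov {n : ℕ} (w : Fin n → Fin N) : Prop :=
  ∀ i : ℕ, ∀ h : i + 1 < n, w ⟨i + 1, h⟩ ≠ w ⟨i, Nat.lt_of_succ_lt h⟩

noncomputable def smirnovWeight {n : ℕ} (w : Fin n → Fin N) :
    Polynomial (MvPolynomial (Fin N) ℤ) :=
  if IsSmirnov w then Polynomial.C (∏ k, MvPolynomial.X (w k)) * Polynomial.X ^ desW w else 0

theorem isSmirnov_cons {n : ℕ} (i : Fin N) (v : Fin (n + 1) → Fin N) :
    IsSmirnov (Fin.cons i v) ↔ v 0 ≠ i ∧ IsSmirnov v := by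
  constructor
  · intro h
    refine ⟨?_, fun k hk => ?_⟩
    · exact h 0 (by omega)
    · exact h (k + 1) (by omega)
  · rintro ⟨h0, h⟩ (_ | k) hk
    · exact h0
    · exact h k (by omega)

theorem desW_cons {n : ℕ} (i : Fin N) (v : Fin (n + 1) → Fin N) :
    desW (Fin.cons i v) = (if v 0 < i then 1 else 0) + desW v := by
  rw [desW, sum_range_succ', add_comm, desW]
  congr 1
  refine sum_congr rfl fun j _ => ?_
  by_cases h : j + 1 < n + 1
  · rw [dif_pos (by omega), dif_pos h]
    rfl
  · rw [dif_neg (by omega), dif_neg h]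

theorem desW_le {n : ℕ} (w : Fin n → Fin N) : desW w ≤ n := by
  unfold desW
  refine (sum_le_card_nsmul (range n) _ 1 fun j _ => ?_).trans (by simp)
  split_ifs <;> omega

theorem smirnovWeight_cons {n : ℕ} (i : Fin N) (v : Fin (n + 1) → Fin N) :
    smirnovWeight (Fin.cons i v) =
      if v 0 = i then 0
      else Polynomial.C (MvPolynomial.X i) * Polynomial.X ^ (if v 0 < i then 1 else 0) *
        smirnovWeight v := by
  simp only [smirnovWeight, isSmirnov_cons, desW_cons, Fin.prod_univ_succ, Fin.cons_zero,
    Fin.cons_succ]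
  split_ifs <;> simp_all [pow_add] <;> ring

theorem smirnovWeight_fin_zero (w : Fin 0 → Fin N) : smirnovWeight w = 1 := by
  simp [smirnovWeight, IsSmirnov, desW]

-- Words of length `n + 1` starting with `i`.
noncomputable def smirnovStartWeight (n : ℕ) (i : Fin N) :
    Polynomial (MvPolynomial (Fin N) ℤ) :=
  ∑ v : Fin n → Fin N, smirnovWeight (Fin.cons i v)

theorem smirnovStartWeight_zero (i : Fin N) :
    smirnovStartWeight 0 i = Polynomial.C (MvPolynomial.X i) := by
  simp [smirnovStartWeight, smirnovWeight, IsSmirnov, desW]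

theorem smirnovStartWeight_succ (n : ℕ) (i : Fin N) :
    smirnovStartWeight (n + 1) i = Polynomial.C (MvPolynomial.X i) *
      (Polynomial.X * ∑ j with j < i, smirnovStartWeight n j +
        ∑ j with i < j, smirnovStartWeight n j) := by
  have hterm : ∀ j, ∑ u : Fin n → Fin N, smirnovWeight (Fin.cons i (Fin.cons j u)) =
      if j = i then 0
      else Polynomial.C (MvPolynomial.X i) * Polynomial.X ^ (if j < i then 1 else 0) *
        smirnovStartWeight n j := by
    intro j
    simp only [smirnovWeight_cons, Fin.cons_zero, smirnovStartWeight]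
    split_ifs <;> simp [mul_sum]
  rw [smirnovStartWeight, Fintype.sum_fun_fin_succ, sum_congr rfl fun j _ => hterm j,
    sum_univ_eq_sum_lt_add_add_sum_gt _ i, if_pos rfl, add_zero, mul_add, mul_sum, mul_sum,
    mul_sum]
  congr 1 <;> refine sum_congr rfl fun j hj => ?_
  · have hji := (mem_filter.1 hj).2
    rw [if_neg hji.ne, if_pos hji]
    ring
  · have hij := (mem_filter.1 hj).2
    rw [if_neg hij.ne', if_neg hij.not_gt]
    ring

theorem sum_smirnovWeight (n : ℕ) :
    ∑ w : Fin n → Fin N, smirnovWeight w =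
      ∑ j ∈ range (n + 1), Polynomial.C (smirnovY N n j) * Polynomial.X ^ j := by
  rw [← sum_fiberwise_of_maps_to (g := desW) (t := range (n + 1))
    fun w _ => mem_range.2 (Nat.lt_succ_of_le (desW_le w))]
  refine sum_congr rfl fun j _ => ?_
  rw [smirnovY, map_sum, sum_mul, sum_filter, sum_filter]
  refine sum_congr rfl fun w _ => ?_
  unfold smirnovWeight IsSmirnov
  split_ifs <;> simp_all

noncomputable def smirnovStartSeries (i : Fin N) :
    PowerSeries (Polynomial (MvPolynomial (Fin N) ℤ)) :=
  X * PowerSeries.mk fun n => smirnovStartWeight n i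

theorem isSmirnovSystem_smirnovStartSeries (N : ℕ) :
    IsSmirnovSystem Polynomial.X (fun i : Fin N => Polynomial.C (MvPolynomial.X i)) 1
      smirnovStartSeries := by
  intro i
  simp only [smirnovStartSeries, ← mul_sum]
  rw [mul_assoc]
  congr 1
  refine PowerSeries.ext fun n => ?_
  rcases n with _ | n
  · simp [smirnovStartWeight_zero]
  · simp [smirnovStartWeight_succ, coeff_succ_X_mul, mul_add, map_sum]

theorem mk_smirnovY_eq_one_add_sum (N : ℕ) :
    (PowerSeries.mk fun n =>
        ∑ j ∈ range (n + 1), Polynomial.C (smirnovY N n j) * Polynomial.X ^ j) =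
      1 + ∑ i, smirnovStartSeries i := by
  refine PowerSeries.ext fun n => ?_
  rcases n with _ | n
  · simp [← sum_smirnovWeight, smirnovStartSeries, smirnovWeight_fin_zero]
  · rw [coeff_mk, ← sum_smirnovWeight, Fintype.sum_fun_fin_succ, map_add, map_sum]
    simp [smirnovStartSeries, coeff_succ_X_mul, smirnovStartWeight]

theorem Eser_eq_prod (N : ℕ) :
    Eser N = ∏ i, (1 + C (Polynomial.C (MvPolynomial.X i)) * X) := by
  refine PowerSeries.ext fun m => ?_
  rw [coeff_prod_one_add_C_mul_X, Eser, coeff_mk, MvPolynomial.esymm, map_sum]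
  simp [map_prod]

theorem Esert_eq_rescale (N : ℕ) : Esert N = rescale Polynomial.X (Eser N) := by
  refine PowerSeries.ext fun m => ?_
  rw [Esert, Eser, coeff_rescale, coeff_mk, coeff_mk, mul_comm]

end SmirnovWords

theorem smirnov_generating_function_general (N : ℕ) :
    (Esert N - tConst N * Eser N) *
      (PowerSeries.mk fun n =>
        ∑ j ∈ Finset.range (n + 1), Polynomial.C (smirnovY N n j) * Polynomial.X ^ j) =
    (1 - tConst N) * Eser N := by
  rw [mk_smirnovY_eq_one_add_sum, Esert_eq_rescale, Eser_eq_prod]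
  exact (isSmirnovSystem_smirnovStartSeries N).mul_one_add_sum

/-- the Smirnov word identity
`(E(tz) - t·E(z)) · (∑_{n,j≥0} Y_{n,j} t^j z^n) = (1-t)·E(z)`. -/
theorem smirnov_generating_function (N : ℕ) (hN : 1 ≤ N) :
    (Esert N - tConst N * Eser N) *
      (PowerSeries.mk fun n =>
        ∑ j ∈ Finset.range (n + 1), Polynomial.C (smirnovY N n j) * Polynomial.X ^ j) =
    (1 - tConst N) * Eser N :=
  smirnov_generating_function_general N
end

section
/- Let P be a natural unit interval order on [n]. Then the statistic inv_{inc(P)} + maj_P is Mahonian: Σ_{σ∈S_n} q^{maj_P(σ)+inv_{inc(P)}(σ)} = [n]_q! in ℤ[q]; equivalently, A_P(q,q) = [n]_q!. -/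
open scoped Classical

/-- Two elements are incomparable with respect to a strict order relation `lt`. -/
def Incomp {n : ℕ} (lt : Fin n → Fin n → Prop) (a b : Fin n) : Prop :=
  a ≠ b ∧ ¬ lt a b ∧ ¬ lt b a

/-- A natural unit interval order on `[n]` (modeled on `Fin n`): a strict partial order
`lt` such that (i) `x <_P y` implies `x < y` in the natural order, and (ii) whenever
`x <_P z` and `y` is `P`-incomparable to both `x` and `z`, then `x < y < z` in the
natural order.  (Irreflexivity and asymmetry follow from condition (i).) -/
structure NUIO (n : ℕ) where
  lt : Fin n → Fin n → Prop
  trans : ∀ a b c, lt a b → lt b c → lt a c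
  natural : ∀ a b, lt a b → (a : ℕ) < (b : ℕ)
  unit : ∀ x y z, lt x z → Incomp lt x y → Incomp lt y z →
    (x : ℕ) < (y : ℕ) ∧ (y : ℕ) < (z : ℕ)

/-- `inv_G(σ)` where `G` is the incomparability graph of the relation `lt`:
the number of pairs `i < j` with `σ(i) > σ(j)` and `{σ(i), σ(j)}` an edge of `G`. -/
noncomputable def invInc {n : ℕ} (lt : Fin n → Fin n → Prop) (σ : Equiv.Perm (Fin n)) : ℕ :=
  (Finset.univ.filter fun p : Fin n × Fin n =>
    p.1 < p.2 ∧ (σ p.2 : ℕ) < (σ p.1 : ℕ) ∧ Incomp lt (σ p.1) (σ p.2)).card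

/-- `maj_P(σ)`: the sum of the (1-based) positions `i` with `σ(i) >_P σ(i+1)`. -/
noncomputable def majP {n : ℕ} (lt : Fin n → Fin n → Prop) (σ : Equiv.Perm (Fin n)) : ℕ :=
  ∑ j ∈ Finset.range n,
    if h : j + 1 < n then
      (if lt (σ ⟨j + 1, h⟩) (σ ⟨j, Nat.lt_of_succ_lt h⟩) then j + 1 else 0)
    else 0

/-- The number of edges of the incomparability graph of the relation `lt`. -/
noncomputable def numIncEdges {n : ℕ} (lt : Fin n → Fin n → Prop) : ℕ :=
  (Finset.univ.filter fun p : Fin n × Fin n => p.1 < p.2 ∧ Incomp lt p.1 p.2).card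

/-!
Every permutation of `[n + 1]` arises exactly once by inserting the largest element `n + 1` into
a permutation `τ` of `[n]` at a gap `g ∈ {0, …, n}`. Index positions of `τ` from `0` and let `S`
be the set of positions `j` with `τ j <_P n + 1` but not `τ (j - 1) >_P τ j`. Inserting at `g`
raises `maj_P + inv_{inc(P)}` by exactly `#{j ≥ g | j ∉ S} + [g ∈ S] (g + 1)`. The bookkeeping
closes because, by the unit interval axiom, `x <_P y ≤ z` implies `x <_P z`, so
`τ (j - 1) >_P τ j` forces `τ j <_P n + 1`. For any `S` this increment takes each value
`0, …, n` exactly once as `g` varies, so each insertion step contributes a factor `[n + 1]_q`.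
-/

open Finset Equiv

section InsertionShift

variable {n : ℕ}

noncomputable def tailCount (P : Fin n → Prop) (g : ℕ) : ℕ :=
  #{j : Fin n | g ≤ j ∧ P j}

lemma tailCount_antitone (P : Fin n → Prop) : Antitone (tailCount P) :=
  fun _ _ hgh => card_le_card fun j hj => by
    simp only [mem_filter, mem_univ, true_and] at hj ⊢
    exact ⟨hgh.trans hj.1, hj.2⟩

lemma tailCount_lt_of_lt {P : Fin n → Prop} {g h : ℕ} (hgh : g < h) (hn : g < n)
    (hg : P ⟨g, hn⟩) : tailCount P h < tailCount P g := by
  refine card_lt_card ⟨fun j hj => ?_, fun hsub => ?_⟩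
  · simp only [mem_filter, mem_univ, true_and] at hj ⊢
    exact ⟨hgh.le.trans hj.1, hj.2⟩
  · have := (mem_filter.mp (hsub (mem_filter.mpr ⟨mem_univ _, le_rfl, hg⟩))).2.1
    simp only at this
    omega

lemma tailCount_not_add_tailCount (S : Fin n → Prop) (g : ℕ) :
    tailCount (fun j => ¬ S j) g + tailCount S g = n - g := by
  have hsplit :=
    card_filter_add_card_filter_not (s := {j : Fin n | g ≤ (j : ℕ)}) (fun j => ¬ S j)
  have hlt := Fin.card_filter_val_lt (n := n) (m := g)
  have hle := card_filter_add_card_filter_not (s := (univ : Finset (Fin n))) (· < g)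
  simp only [filter_filter, not_lt, not_not, card_univ, Fintype.card_fin] at hsplit hle
  simp only [tailCount]
  omega

variable {S : Fin n → Prop}

noncomputable def insertionShift (S : Fin n → Prop) (g : ℕ) : ℕ :=
  tailCount (fun j => ¬ S j) g + if ∃ j : Fin n, (j : ℕ) = g ∧ S j then g + 1 else 0

lemma insertionShift_of_not {g : ℕ} (hg : ¬ ∃ j : Fin n, (j : ℕ) = g ∧ S j) :
    insertionShift S g = tailCount (fun j => ¬ S j) g := by
  simp [insertionShift, hg]

lemma insertionShift_add_tailCount {g : ℕ} (hn : g < n) (hg : S ⟨g, hn⟩) :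
    insertionShift S g + tailCount S g = n + 1 := by
  have hex : ∃ j : Fin n, (j : ℕ) = g ∧ S j := ⟨_, rfl, hg⟩
  have := tailCount_not_add_tailCount S g
  simp only [insertionShift, hex, if_true]
  omega

lemma insertionShift_le {g : ℕ} (hg : g ≤ n) : insertionShift S g ≤ n := by
  by_cases hS : ∃ j : Fin n, (j : ℕ) = g ∧ S j
  · obtain ⟨j, rfl, hj⟩ := hS
    have h1 := insertionShift_add_tailCount j.isLt hj
    have h2 : 0 < tailCount S j := card_pos.mpr ⟨j, by simpa using hj⟩
    omega
  · have := tailCount_not_add_tailCount S g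
    rw [insertionShift_of_not hS]
    omega

lemma insertionShift_ne_of_lt {g h : ℕ} (hgh : g < h) (hh : h ≤ n) :
    insertionShift S g ≠ insertionShift S h := by
  have hgn : g < n := by omega
  have hsum_g := tailCount_not_add_tailCount S g
  have hsum_h := tailCount_not_add_tailCount S h
  have hN := tailCount_antitone (fun j => ¬ S j) hgh.le
  have hM := tailCount_antitone S hgh.le
  by_cases hSh : ∃ j : Fin n, (j : ℕ) = h ∧ S j
  · obtain ⟨k, rfl, hk⟩ := hSh
    have := insertionShift_add_tailCount k.isLt hk
    by_cases hSg : S ⟨g, hgn⟩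
    · have := insertionShift_add_tailCount hgn hSg
      have := tailCount_lt_of_lt hgh hgn hSg
      omega
    · rw [insertionShift_of_not (by rintro ⟨j, rfl, hj⟩; exact hSg hj)]
      omega
  · rw [insertionShift_of_not hSh]
    by_cases hSg : S ⟨g, hgn⟩
    · have := insertionShift_add_tailCount hgn hSg
      omega
    · rw [insertionShift_of_not (by rintro ⟨j, rfl, hj⟩; exact hSg hj)]
      exact (tailCount_lt_of_lt hgh hgn (P := fun j => ¬ S j) hSg).ne'

lemma insertionShift_injOn : Set.InjOn (insertionShift S) (range (n + 1)) := by
  intro g hg h hh hgh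
  simp only [coe_range, Set.mem_Iio, Nat.lt_succ_iff] at hg hh
  rcases lt_trichotomy g h with hlt | rfl | hlt
  · exact absurd hgh (insertionShift_ne_of_lt hlt hh)
  · rfl
  · exact absurd hgh.symm (insertionShift_ne_of_lt hlt hg)

lemma image_insertionShift : (range (n + 1)).image (insertionShift S) = range (n + 1) := by
  refine eq_of_subset_of_card_le (fun k hk => ?_) (card_image_of_injOn insertionShift_injOn).ge
  obtain ⟨g, hg, rfl⟩ := mem_image.mp hk
  rw [mem_range, Nat.lt_succ_iff] at hg ⊢
  exact insertionShift_le hg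

lemma sum_pow_insertionShift {R : Type*} [Semiring R] (x : R) :
    ∑ g : Fin (n + 1), x ^ insertionShift S g = qIntE x (n + 1) := by
  rw [Fin.sum_univ_eq_sum_range (fun g => x ^ insertionShift S g), qIntE,
    ← sum_image (f := (x ^ ·)) insertionShift_injOn, image_insertionShift]

end InsertionShift

section InsertTop

variable {n : ℕ}

def insertTop (τ : Perm (Fin n)) (g : Fin (n + 1)) : Perm (Fin (n + 1)) :=
  (finSuccEquiv' g).trans ((optionCongr τ).trans finSuccEquivLast.symm)

@[simp] lemma insertTop_apply_self (τ : Perm (Fin n)) (g : Fin (n + 1)) :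
    insertTop τ g g = Fin.last n := by
  simp [insertTop]

@[simp] lemma insertTop_apply_succAbove (τ : Perm (Fin n)) (g : Fin (n + 1)) (j : Fin n) :
    insertTop τ g (g.succAbove j) = (τ j).castSucc := by
  simp [insertTop]

lemma insertTop_injective :
    Function.Injective fun p : Perm (Fin n) × Fin (n + 1) => insertTop p.1 p.2 := by
  rintro ⟨τ, g⟩ ⟨τ', g'⟩ h
  simp only at h
  obtain rfl : g = g' := (insertTop τ' g').injective (by
    rw [insertTop_apply_self, ← h, insertTop_apply_self])
  obtain rfl : τ = τ' := Equiv.ext fun j => Fin.castSucc_injective n (by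
    rw [← insertTop_apply_succAbove, ← insertTop_apply_succAbove, h])
  rfl

lemma insertTop_bijective :
    Function.Bijective fun p : Perm (Fin n) × Fin (n + 1) => insertTop p.1 p.2 := by
  rw [Fintype.bijective_iff_injective_and_card]
  refine ⟨insertTop_injective, ?_⟩
  simp [Fintype.card_perm, Nat.factorial_succ, mul_comm]

end InsertTop

namespace NUIO

variable {n : ℕ}

lemma lt_of_lt_of_le (P : NUIO n) {x y z : Fin n} (hxy : P.lt x y) (hyz : y ≤ z) :
    P.lt x z := by
  by_contra hxz
  have hyz' : ¬ P.lt y z := fun h => hxz (P.trans x y z hxy h)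
  have hnat := P.natural x y hxy
  rcases hyz.lt_or_eq with hyz | rfl
  · rw [Fin.lt_def] at hyz
    have := P.unit x z y hxy
      ⟨by rintro rfl; omega, hxz, fun h => by have := P.natural z x h; omega⟩
      ⟨by rintro rfl; omega, fun h => by have := P.natural z y h; omega, hyz'⟩
    omega
  · exact hxz hxy

def restrict (P : NUIO (n + 1)) : NUIO n where
  lt a b := P.lt a.castSucc b.castSucc
  trans _ _ _ := P.trans _ _ _
  natural _ _ h := by simpa using P.natural _ _ h
  unit x y z hxz hxy hyz := by
    have incomp_castSucc : ∀ a b : Fin n, Incomp (fun a b => P.lt a.castSucc b.castSucc) a b →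
        Incomp P.lt a.castSucc b.castSucc :=
      fun a b ⟨hne, hab, hba⟩ => ⟨fun h => hne (Fin.castSucc_injective n h), hab, hba⟩
    simpa using P.unit _ _ _ hxz (incomp_castSucc x y hxy) (incomp_castSucc y z hyz)

lemma restrict_incomp_iff (P : NUIO (n + 1)) {a b : Fin n} :
    Incomp P.restrict.lt a b ↔ Incomp P.lt a.castSucc b.castSucc := by
  simp [Incomp, restrict]

lemma not_last_lt (P : NUIO (n + 1)) (x : Fin (n + 1)) : ¬ P.lt (Fin.last n) x :=
  fun h => (Fin.le_last x).not_gt (P.natural _ _ h)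

lemma incomp_last_iff (P : NUIO (n + 1)) (x : Fin n) :
    Incomp P.lt (Fin.last n) x.castSucc ↔ ¬ P.lt x.castSucc (Fin.last n) := by
  simp [Incomp, P.not_last_lt, (Fin.castSucc_lt_last x).ne']

end NUIO

section Descents

variable {m : ℕ}

/-- A descent of `σ` at the 1-based position `i`, as counted by `majP`, is a descent into the
0-based position `i`. -/
def IsDescentInto (lt : Fin m → Fin m → Prop) (σ : Perm (Fin m)) (j : Fin m) : Prop :=
  ∃ i : Fin m, (i : ℕ) + 1 = j ∧ lt (σ j) (σ i)

lemma not_isDescentInto_zero (lt : Fin (m + 1) → Fin (m + 1) → Prop) (σ : Perm (Fin (m + 1))) :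
    ¬ IsDescentInto lt σ 0 := by
  rintro ⟨i, hi, -⟩
  simp at hi

lemma isDescentInto_succ_iff (lt : Fin (m + 1) → Fin (m + 1) → Prop) (σ : Perm (Fin (m + 1)))
    (i : Fin m) : IsDescentInto lt σ i.succ ↔ lt (σ i.succ) (σ i.castSucc) := by
  constructor
  · rintro ⟨k, hk, hlt⟩
    obtain rfl : k = i.castSucc := Fin.ext (by simp at hk ⊢; omega)
    exact hlt
  · exact fun h => ⟨i.castSucc, by simp, h⟩

lemma majP_eq_sum_isDescentInto (lt : Fin m → Fin m → Prop) (σ : Perm (Fin m)) :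
    majP lt σ = ∑ j, if IsDescentInto lt σ j then (j : ℕ) else 0 := by
  cases m with
  | zero => simp [majP]
  | succ m =>
    rw [Fin.sum_univ_succ, if_neg (not_isDescentInto_zero lt σ), zero_add, majP,
      sum_range_succ, dif_neg (by omega), add_zero, ← Fin.sum_univ_eq_sum_range]
    refine Fintype.sum_congr _ _ fun i => ?_
    rw [dif_pos (by simp), isDescentInto_succ_iff]
    rfl

lemma invInc_eq_sum (lt : Fin m → Fin m → Prop) (σ : Perm (Fin m)) :
    invInc lt σ = ∑ i, ∑ j,
      if i < j ∧ (σ j : ℕ) < σ i ∧ Incomp lt (σ i) (σ j) then 1 else 0 := by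
  rw [invInc, card_filter, Fintype.sum_prod_type]

end Descents

lemma Fin.val_succAbove {n : ℕ} (g : Fin (n + 1)) (j : Fin n) :
    (g.succAbove j : ℕ) = if (j : ℕ) < g then (j : ℕ) else (j : ℕ) + 1 := by
  unfold Fin.succAbove
  split_ifs <;> simp_all [Fin.lt_def]

lemma ite_exists_eq_sum_ite {α : Type*} [Fintype α] {Q : α → Prop} [DecidablePred Q]
    {_ : Decidable (∃ a, Q a)} (hQ : ∀ a b, Q a → Q b → a = b) (c : ℕ) :
    (if ∃ a, Q a then c else 0) = ∑ a, if Q a then c else 0 := by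
  split_ifs with h
  · obtain ⟨a, ha⟩ := h
    rw [Fintype.sum_eq_single a fun b hb => if_neg fun hQb => hb (hQ b a hQb ha), if_pos ha]
  · exact (sum_eq_zero fun a _ => if_neg fun ha => h ⟨a, ha⟩).symm

section InsertTopStatistics

variable {n : ℕ} (P : NUIO (n + 1)) (τ : Perm (Fin n)) (g : Fin (n + 1))

lemma not_isDescentInto_insertTop_self : ¬ IsDescentInto P.lt (insertTop τ g) g := by
  rintro ⟨i, -, h⟩
  exact P.not_last_lt _ (by simpa using h)

lemma isDescentInto_insertTop_succAbove (j : Fin n) :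
    IsDescentInto P.lt (insertTop τ g) (g.succAbove j) ↔
      if (j : ℕ) = g then P.lt (τ j).castSucc (Fin.last n)
      else IsDescentInto P.restrict.lt τ j := by
  have hval := Fin.val_succAbove g
  constructor
  · rintro ⟨i, hi, hlt⟩
    by_cases hig : i = g
    · subst hig
      have := hval j
      rw [if_pos (by split_ifs at this <;> omega)]
      simpa using hlt
    · obtain ⟨k, rfl⟩ := Fin.exists_succAbove_eq hig
      have := hval j
      have := hval k
      rw [if_neg (by split_ifs at * <;> omega)]
      exact ⟨k, by split_ifs at * <;> omega, by simpa [NUIO.restrict] using hlt⟩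
  · split_ifs with hjg
    · refine fun h => ⟨g, ?_, by simpa using h⟩
      rw [hval, if_neg (by omega)]
      omega
    · rintro ⟨k, hk, hlt⟩
      refine ⟨g.succAbove k, ?_, by simpa [NUIO.restrict] using hlt⟩
      rw [hval, hval]
      split_ifs <;> omega

lemma majP_insertTop :
    majP P.lt (insertTop τ g) = ∑ j : Fin n,
      if (j : ℕ) = g then (if P.lt (τ j).castSucc (Fin.last n) then (g : ℕ) + 1 else 0)
      else if IsDescentInto P.restrict.lt τ j then (g.succAbove j : ℕ) else 0 := by
  rw [majP_eq_sum_isDescentInto, Fin.sum_univ_succAbove _ g,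
    if_neg (not_isDescentInto_insertTop_self P τ g), zero_add]
  refine Fintype.sum_congr _ _ fun j => ?_
  rw [isDescentInto_insertTop_succAbove, Fin.val_succAbove]
  split_ifs <;> first | rfl | omega

lemma invInc_insertTop :
    invInc P.lt (insertTop τ g) = invInc P.restrict.lt τ +
      tailCount (fun j => ¬ P.lt (τ j).castSucc (Fin.last n)) g := by
  rw [invInc_eq_sum, invInc_eq_sum, Fin.sum_univ_succAbove _ g, Fin.sum_univ_succAbove _ g]
  simp_rw [Fin.sum_univ_succAbove _ g]
  have hτ : ∀ j, ¬ n < (τ j : ℕ) := fun j => (τ j).isLt.not_gt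
  simp [tailCount, NUIO.incomp_last_iff, NUIO.restrict_incomp_iff, hτ,
    Fin.lt_succAbove_iff_le_castSucc, Fin.le_def, add_comm]

lemma lt_last_of_isDescentInto {j : Fin n} (h : IsDescentInto P.restrict.lt τ j) :
    P.lt (τ j).castSucc (Fin.last n) :=
  let ⟨_, _, hlt⟩ := h
  P.lt_of_lt_of_le hlt (Fin.le_last _)

lemma majP_add_invInc_insertTop :
    majP P.lt (insertTop τ g) + invInc P.lt (insertTop τ g) =
      majP P.restrict.lt τ + invInc P.restrict.lt τ + insertionShift
        (fun j => P.lt (τ j).castSucc (Fin.last n) ∧ ¬ IsDescentInto P.restrict.lt τ j) g := by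
  rw [majP_insertTop, invInc_insertTop, majP_eq_sum_isDescentInto, insertionShift,
    ite_exists_eq_sum_ite (fun i j hi hj => Fin.ext (hi.1.trans hj.1.symm)), tailCount,
    tailCount, card_filter, card_filter, add_left_comm, add_right_comm _ (invInc _ _),
    add_comm (invInc _ _), ← sum_add_distrib, ← sum_add_distrib, ← sum_add_distrib]
  congr 1
  refine Fintype.sum_congr _ _ fun j => ?_
  rw [Fin.val_succAbove]
  by_cases hD : IsDescentInto P.restrict.lt τ j
  · have hC := lt_last_of_isDescentInto P τ hD
    simp only [hC, hD, not_true_eq_false, not_false_eq_true, and_false, and_true, if_true,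
      if_false]
    split_ifs <;> omega
  · by_cases hC : P.lt (τ j).castSucc (Fin.last n) <;>
      simp only [hC, hD, not_true_eq_false, not_false_eq_true, and_false, and_true, if_true,
        if_false] <;> split_ifs <;> omega

end InsertTopStatistics

theorem nuio_mahonian_general (n : ℕ) (P : NUIO n) :
    ∑ σ : Equiv.Perm (Fin n),
        (Polynomial.X : Polynomial ℤ) ^ (majP P.lt σ + invInc P.lt σ) =
      qFactE (Polynomial.X : Polynomial ℤ) n := by
  induction n with
  | zero => simp [majP, invInc, qFactE]
  | succ n ih =>
    rw [← insertTop_bijective.sum_comp, Fintype.sum_prod_type]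
    simp_rw [majP_add_invInc_insertTop, pow_add, ← mul_sum, sum_pow_insertionShift, ← sum_mul,
      ← pow_add, ih]
    rfl

/-- for a natural unit interval order `P` on `[n]`, the statistic
`maj_P + inv_{inc(P)}` is Mahonian: `∑_{σ ∈ S_n} q^{maj_P σ + inv_{inc(P)} σ} = [n]_q!`,
i.e. `A_P(q,q) = [n]_q!` in `ℤ[q]`. -/
theorem nuio_mahonian (n : ℕ) (hn : 1 ≤ n) (P : NUIO n) :
    ∑ σ : Equiv.Perm (Fin n),
        (Polynomial.X : Polynomial ℤ) ^ (majP P.lt σ + invInc P.lt σ) =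
      qFactE (Polynomial.X : Polynomial ℤ) n :=
  nuio_mahonian_general n P
end

section
/- Let G be a graph on vertex set [n] and fix N ≥ 1. Then the chromatic symmetric polynomial satisfies X_G(x_1,…,x_N) = Σ_{π ∈ Π_{G,n}} μ(0̂,π) Π_{B a block of π} p_{|B|}(x_1,…,x_N), where μ is the Möbius function of the poset Π_{G,n} and p_m = x_1^m+⋯+x_N^m is the power sum polynomial. (Since μ(0̂,π) has sign (−1)^{n−|π|}, this is equivalent to the paper's formulation ωX_G = Σ_π |μ(0̂,π)| p_{pa(π)}.) -/
open scoped Classical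

/-- The chromatic symmetric polynomial `X_G(x_1,…,x_N)` of a graph `G` on `[n]`. -/
noncomputable def chromSym (N n : ℕ) (G : SimpleGraph (Fin n)) : MvPolynomial (Fin N) ℤ :=
  ∑ c ∈ Finset.univ.filter (fun c : Fin n → Fin N => ∀ a b, G.Adj a b → c a ≠ c b),
    ∏ i, MvPolynomial.X (c i)

/-- `π` is a set partition of `[n]`: its blocks are nonempty, pairwise disjoint,
and their union is all of `[n]`. -/
def IsSetPartition {n : ℕ} (π : Finset (Finset (Fin n))) : Prop :=
  (∀ B ∈ π, B.Nonempty) ∧ (∀ B ∈ π, ∀ C ∈ π, B ≠ C → Disjoint B C) ∧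
    π.sup id = Finset.univ

/-- The G-connected set partitions of `[n]`: the subgraph of `G` induced on each
block is connected.  This is the poset `Π_{G,n}`. -/
noncomputable def connPartitions {n : ℕ} (G : SimpleGraph (Fin n)) :
    Finset (Finset (Finset (Fin n))) :=
  Finset.univ.filter fun π => IsSetPartition π ∧
    ∀ B ∈ π, (G.induce (B : Set (Fin n))).Connected

/-- The refinement order on set partitions: `π ≤ θ` iff each block of `π` is
contained in some block of `θ`. -/
def Refines {n : ℕ} (π θ : Finset (Finset (Fin n))) : Prop :=
  ∀ B ∈ π, ∃ C ∈ θ, B ⊆ C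

/-- The minimum set partition `0̂` of `[n]`, into singletons. -/
noncomputable def botPartition (n : ℕ) : Finset (Finset (Fin n)) :=
  Finset.univ.image fun i => {i}

/-- The power sum polynomial `p_m = x_1^m + ⋯ + x_N^m`. -/
noncomputable def powSum (N m : ℕ) : MvPolynomial (Fin N) ℤ :=
  ∑ i : Fin N, MvPolynomial.X i ^ m

/-!
Expand each `∏_{B ∈ π} p_{|B|}` as the sum of `x^c` over the colourings `c` that are constant
on the blocks of `π`, and swap the two sums. For a fixed colouring `c`, a `G`-connected
partition has `c`-constant blocks exactly when it refines the partition `π_c` into connected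
components of the monochromatic subgraph of `G`, so the coefficient of `x^c` is
`∑_{θ ≤ π_c} μ(0̂, θ) = δ_{0̂, π_c}`; and `π_c = 0̂` exactly when `c` is proper.
-/

namespace SimpleGraph

variable {V κ : Type*} (G : SimpleGraph V) (c : V → κ)

@[simps]
def monochromaticSubgraph : SimpleGraph V where
  Adj a b := G.Adj a b ∧ c a = c b
  symm := ⟨fun _ _ h => ⟨h.1.symm, h.2.symm⟩⟩
  loopless := ⟨fun a h => G.loopless.irrefl a h.1⟩

theorem monochromaticSubgraph_le : G.monochromaticSubgraph c ≤ G := fun _ _ h => h.1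

variable {G c}

theorem Walk.apply_eq_of_monochromaticSubgraph {u v : V}
    (w : (G.monochromaticSubgraph c).Walk u v) : c u = c v := by
  induction w with
  | nil => rfl
  | cons h _ ih => exact h.2.trans ih

theorem Reachable.apply_eq_of_monochromaticSubgraph {u v : V}
    (h : (G.monochromaticSubgraph c).Reachable u v) : c u = c v :=
  h.elim Walk.apply_eq_of_monochromaticSubgraph

theorem monochromaticSubgraph_induce_eq {s : Set V} (hs : ∀ a ∈ s, ∀ b ∈ s, c a = c b) :
    (G.monochromaticSubgraph c).induce s = G.induce s := by
  ext ⟨a, ha⟩ ⟨b, hb⟩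
  simp [hs a ha b hb]

theorem monochromaticSubgraph_eq_bot_iff :
    G.monochromaticSubgraph c = ⊥ ↔ ∀ a b, G.Adj a b → c a ≠ c b := by
  simp [eq_bot_iff_forall_not_adj]

end SimpleGraph

open SimpleGraph

section Partitions

variable {n : ℕ}

def IsBlockConstant {κ : Type*} (π : Finset (Finset (Fin n))) (c : Fin n → κ) : Prop :=
  ∀ B ∈ π, ∀ a ∈ B, ∀ b ∈ B, c a = c b

noncomputable def componentPartition (H : SimpleGraph (Fin n)) : Finset (Finset (Fin n)) :=
  Finset.univ.image fun v => (H.connectedComponentMk v).supp.toFinset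

variable {H : SimpleGraph (Fin n)}

theorem isSetPartition_componentPartition : IsSetPartition (componentPartition H) := by
  refine ⟨?_, ?_, ?_⟩
  · simp only [componentPartition, Finset.mem_image, Finset.mem_univ, true_and]
    rintro _ ⟨v, rfl⟩
    exact ⟨v, by simp⟩
  · simp only [componentPartition, Finset.mem_image, Finset.mem_univ, true_and]
    rintro _ ⟨u, rfl⟩ _ ⟨v, rfl⟩ hne
    refine Finset.disjoint_left.mpr fun x hxu hxv => hne ?_
    simp only [Set.mem_toFinset, ConnectedComponent.mem_supp_iff] at hxu hxv
    rw [← hxu, hxv]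
  · refine Finset.eq_univ_of_forall fun v => Finset.mem_sup.mpr ?_
    exact ⟨_, Finset.mem_image_of_mem _ (Finset.mem_univ v), by simp⟩

theorem connected_induce_of_mem_componentPartition {B : Finset (Fin n)}
    (hB : B ∈ componentPartition H) : (H.induce (B : Set (Fin n))).Connected := by
  obtain ⟨v, -, rfl⟩ := Finset.mem_image.mp hB
  rw [Set.coe_toFinset]
  exact (H.connectedComponentMk v).connected_toSimpleGraph

theorem refines_componentPartition_iff {θ : Finset (Finset (Fin n))}
    (hθ : ∀ B ∈ θ, B.Nonempty) :
    Refines θ (componentPartition H) ↔ ∀ B ∈ θ, ∀ a ∈ B, ∀ b ∈ B, H.Reachable a b := by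
  refine ⟨fun h B hB a ha b hb => ?_, fun h B hB => ?_⟩
  · obtain ⟨_, hC, hBC⟩ := h B hB
    obtain ⟨v, -, rfl⟩ := Finset.mem_image.mp hC
    exact ConnectedComponent.reachable_of_mem_supp _ (Set.mem_toFinset.mp (hBC ha))
      (Set.mem_toFinset.mp (hBC hb))
  · obtain ⟨a, ha⟩ := hθ B hB
    refine ⟨_, Finset.mem_image_of_mem _ (Finset.mem_univ a), fun b hb => ?_⟩
    simpa [ConnectedComponent.mem_supp_iff, ConnectedComponent.eq] using (h B hB a ha b hb).symm

theorem componentPartition_eq_botPartition_iff :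
    componentPartition H = botPartition n ↔ H = ⊥ := by
  refine ⟨fun h => eq_bot_iff_forall_not_adj.mpr fun a b hab => ?_, ?_⟩
  · have hmem : (H.connectedComponentMk a).supp.toFinset ∈ botPartition n :=
      h ▸ Finset.mem_image_of_mem _ (Finset.mem_univ a)
    obtain ⟨x, -, hx⟩ := Finset.mem_image.mp hmem
    have hsupp : ∀ y, H.Reachable a y → y = x := fun y hy => by
      have hy' : y ∈ (H.connectedComponentMk a).supp.toFinset := by
        simpa [ConnectedComponent.mem_supp_iff, ConnectedComponent.eq] using hy.symm
      rwa [← hx, Finset.mem_singleton] at hy'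
    exact hab.ne ((hsupp a Reachable.rfl).trans (hsupp b hab.reachable).symm)
  · rintro rfl
    refine Finset.image_congr fun v _ => Finset.ext fun w => ?_
    simp [ConnectedComponent.mem_supp_iff, ConnectedComponent.eq, reachable_bot]

end Partitions

section Monochromatic

variable {n : ℕ} {κ : Type*} {G : SimpleGraph (Fin n)}

theorem componentPartition_monochromaticSubgraph_mem_connPartitions (c : Fin n → κ) :
    componentPartition (G.monochromaticSubgraph c) ∈ connPartitions G := by
  refine Finset.mem_filter.mpr ⟨Finset.mem_univ _, isSetPartition_componentPartition,
    fun B hB => ?_⟩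
  exact (connected_induce_of_mem_componentPartition hB).mono
    (comap_monotone _ (G.monochromaticSubgraph_le c))

theorem refines_componentPartition_monochromaticSubgraph_iff {θ : Finset (Finset (Fin n))}
    (hθ : θ ∈ connPartitions G) (c : Fin n → κ) :
    Refines θ (componentPartition (G.monochromaticSubgraph c)) ↔ IsBlockConstant θ c := by
  obtain ⟨-, ⟨hne, -, -⟩, hconn⟩ := Finset.mem_filter.mp hθ
  rw [refines_componentPartition_iff hne]
  refine ⟨fun h B hB a ha b hb => (h B hB a ha b hb).apply_eq_of_monochromaticSubgraph,
    fun h B hB a ha b hb => ?_⟩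
  have hmono : ((G.monochromaticSubgraph c).induce (B : Set (Fin n))).Connected := by
    rw [monochromaticSubgraph_induce_eq (h B hB)]
    exact hconn B hB
  exact (hmono.preconnected ⟨a, ha⟩ ⟨b, hb⟩).map (Embedding.induce _).toHom

end Monochromatic

theorem IsSetPartition.existsUnique_mem {n : ℕ} {π : Finset (Finset (Fin n))}
    (hπ : IsSetPartition π) (i : Fin n) : ∃! B : π, i ∈ B.1 := by
  obtain ⟨-, hdisj, hsup⟩ := hπ
  obtain ⟨B, hB, hiB⟩ := Finset.mem_sup.mp (hsup ▸ Finset.mem_univ i)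
  refine ⟨⟨B, hB⟩, hiB, fun C hiC => Subtype.ext ?_⟩
  by_contra hCB
  exact Finset.disjoint_left.mp (hdisj _ C.2 _ hB hCB) hiC hiB

/-- Colourings constant on the blocks of `π` correspond to colourings `p` of the blocks, and
`x^c = ∏_B x_{p B}^{|B|}`. -/
theorem prod_sum_pow_card_eq_sum_isBlockConstant {n : ℕ} {R κ : Type*} [CommSemiring R]
    [Fintype κ] (f : κ → R) {π : Finset (Finset (Fin n))} (hπ : IsSetPartition π) :
    ∏ B ∈ π, ∑ k, f k ^ B.card =
      ∑ c ∈ Finset.univ.filter (IsBlockConstant π), ∏ i, f (c i) := by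
  choose block hblock hblock_eq using hπ.existsUnique_mem
  choose rep hrep using fun B : π => hπ.1 B.1 B.2
  have hfiber : ∀ B : π, Finset.univ.filter (block · = B) = B.1 := fun B => by
    ext i
    simpa using ⟨fun h => h ▸ hblock i, fun hi => (hblock_eq i B hi).symm⟩
  have hprod : ∀ p : π → κ, ∏ B : π, f (p B) ^ B.1.card = ∏ i, f (p (block i)) := fun p => by
    rw [← Finset.prod_fiberwise Finset.univ block]
    refine Finset.prod_congr rfl fun B _ => ?_
    rw [hfiber, ← Finset.prod_const]
    exact Finset.prod_congr rfl fun i hi => by rw [← hblock_eq i B hi]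
  calc ∏ B ∈ π, ∑ k, f k ^ B.card = ∏ B : π, ∑ k, f k ^ B.1.card :=
        (Finset.prod_coe_sort π _).symm
    _ = ∑ p : π → κ, ∏ B : π, f (p B) ^ B.1.card := Fintype.prod_sum _
    _ = ∑ c ∈ Finset.univ.filter (IsBlockConstant π), ∏ i, f (c i) := by
      refine Finset.sum_nbij' (fun p i => p (block i)) (fun c B => c (rep B)) ?_ ?_ ?_ ?_
        fun p _ => hprod p
      · intro p _
        simp only [Finset.mem_filter, Finset.mem_univ, true_and]
        intro B hB a ha b hb
        exact congrArg p ((hblock_eq a ⟨B, hB⟩ ha).symm.trans (hblock_eq b ⟨B, hB⟩ hb))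
      · exact fun _ _ => Finset.mem_univ _
      · exact fun p _ => funext fun B => congrArg p (hblock_eq (rep B) B (hrep B)).symm
      · intro c hc
        exact funext fun i => (Finset.mem_filter.mp hc).2 _ (block i).2 _ (hrep _) _ (hblock i)

theorem chromatic_psum_expansion_general (n N : ℕ) (G : SimpleGraph (Fin n))
    (mu : Finset (Finset (Fin n)) → ℤ)
    (hmu : ∀ π ∈ connPartitions G,
      (∑ θ ∈ (connPartitions G).filter (fun θ => Refines θ π), mu θ) =
        if π = botPartition n then 1 else 0) :
    chromSym N n G =
      ∑ π ∈ connPartitions G, mu π • ∏ B ∈ π, powSum N B.card := by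
  have hcoeff : ∀ c : Fin n → Fin N,
      ∑ π ∈ (connPartitions G).filter (IsBlockConstant · c), mu π =
        if ∀ a b, G.Adj a b → c a ≠ c b then 1 else 0 := fun c => by
    rw [← Finset.filter_congr fun π hπ =>
        refines_componentPartition_monochromaticSubgraph_iff hπ c,
      hmu _ (componentPartition_monochromaticSubgraph_mem_connPartitions c)]
    simp only [componentPartition_eq_botPartition_iff, monochromaticSubgraph_eq_bot_iff]
  calc chromSym N n G
      = ∑ c : Fin n → Fin N,
          (∑ π ∈ (connPartitions G).filter (IsBlockConstant · c), mu π) •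
            ∏ i, MvPolynomial.X (c i) := by
        simp only [hcoeff, ite_smul, one_smul, zero_smul, chromSym, Finset.sum_filter]
    _ = ∑ π ∈ connPartitions G, ∑ c ∈ Finset.univ.filter (IsBlockConstant π),
          mu π • ∏ i, MvPolynomial.X (c i) := by
        simp only [Finset.sum_smul, Finset.sum_filter, ite_smul, zero_smul]
        exact Finset.sum_comm
    _ = ∑ π ∈ connPartitions G, mu π • ∏ B ∈ π, powSum N B.card := by
        refine Finset.sum_congr rfl fun π hπ => ?_
        simp only [powSum]
        rw [prod_sum_pow_card_eq_sum_isBlockConstant _ (Finset.mem_filter.mp hπ).2.1,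
          Finset.smul_sum]

/-- Stanley's power sum expansion of the chromatic symmetric polynomial:
`X_G = ∑_{π ∈ Π_{G,n}} μ(0̂,π) ∏_{B block of π} p_{|B|}`, where the Möbius function
`μ(0̂,·)` of `Π_{G,n}` is characterized by the recursion
`∑_{θ ∈ Π_{G,n}, θ ≤ π} μ(0̂,θ) = δ_{0̂,π}` for all `π ∈ Π_{G,n}`. -/
theorem chromatic_psum_expansion (n N : ℕ) (hN : 1 ≤ N) (G : SimpleGraph (Fin n))
    (mu : Finset (Finset (Fin n)) → ℤ)
    (hmu : ∀ π ∈ connPartitions G,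
      (∑ θ ∈ (connPartitions G).filter (fun θ => Refines θ π), mu θ) =
        if π = botPartition n then 1 else 0) :
    chromSym N n G =
      ∑ π ∈ connPartitions G, mu π • ∏ B ∈ π, powSum N B.card :=
  chromatic_psum_expansion_general n N G mu hmu
end

section
/- Let P be a natural unit interval order on [n] and fix N ≥ 1. Then the chromatic quasisymmetric polynomial X_{inc(P)}(x_1,…,x_N;t) is a symmetric polynomial in x_1,…,x_N: for every permutation τ of [N] and every j ≥ 0, the coefficient of t^j in X_{inc(P)}(x_1,…,x_N;t) is invariant under the substitution x_i ↦ x_{τ(i)}. -/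
/-!
It suffices to show invariance under the transpositions `k ↔ k + 1` of adjacent colours. For a
proper colouring `c`, let `S` be the set of vertices coloured `k` or `k + 1`. The unit interval
property forbids an element of `S` strictly between two incomparable elements of `S` (the three
would be pairwise incomparable, with only two colours available), so the edges of `inc(P)` inside
`S` join consecutive elements of `S`: the components are paths with alternating colours.
Turning every such path end to end and then exchanging `k` and `k + 1` is an involution on proper
colourings. It maps ascents bijectively to ascents: an edge inside a path is reflected together
with its two colours, and an edge leaving `S` compares a colour in `{k, k + 1}` with one outside,
which gives the same answer for `k` and `k + 1`. Since the reflection permutes the vertices, the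
monomial changes exactly by exchanging `x_k` and `x_{k+1}`.
-/

open scoped Classical

/-- The ascent number of a coloring `c` of the incomparability graph of `lt`:
the number of edges `{i,j}` with `i < j` and `c i < c j`. -/
noncomputable def ascC {n N : ℕ} (lt : Fin n → Fin n → Prop) (c : Fin n → Fin N) : ℕ :=
  (Finset.univ.filter fun p : Fin n × Fin n =>
    p.1 < p.2 ∧ Incomp lt p.1 p.2 ∧ (c p.1 : ℕ) < (c p.2 : ℕ)).card

/-- The chromatic quasisymmetric polynomial `X_G(x_1,…,x_N;t)` of the incomparability
graph `G` of `lt`, as a polynomial in `t` over `ℤ[x_1,…,x_N]`. -/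
noncomputable def chromIncQSym (N n : ℕ) (lt : Fin n → Fin n → Prop) :
    Polynomial (MvPolynomial (Fin N) ℤ) :=
  ∑ c ∈ Finset.univ.filter (fun c : Fin n → Fin N =>
      ∀ a b : Fin n, Incomp lt a b → c a ≠ c b),
    Polynomial.X ^ ascC lt c * Polynomial.C (∏ i, MvPolynomial.X (c i))

open Finset

theorem Incomp.symm {n : ℕ} {lt : Fin n → Fin n → Prop} {a b : Fin n} (h : Incomp lt a b) :
    Incomp lt b a :=
  ⟨h.1.symm, h.2.2, h.2.1⟩

theorem NUIO.incomp_of_lt_of_lt {n : ℕ} (P : NUIO n) {x y z : Fin n} (hxy : x < y) (hyz : y < z)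
    (hxz : Incomp P.lt x z) : Incomp P.lt x y ∧ Incomp P.lt y z := by
  have not_lt_of_lt {a b : Fin n} (hab : a < b) : ¬ P.lt b a := fun h => by
    have := P.natural _ _ h
    omega
  have not_lt_xy : ¬ P.lt x y := fun h => by
    have hyz' : Incomp P.lt y z :=
      ⟨hyz.ne, fun h' => hxz.2.1 (P.trans _ _ _ h h'), not_lt_of_lt hyz⟩
    have := P.unit x z y h hxz hyz'.symm
    omega
  have not_lt_yz : ¬ P.lt y z := fun h => by
    have := P.unit y x z h ⟨hxy.ne', not_lt_of_lt hxy, not_lt_xy⟩ hxz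
    omega
  exact ⟨⟨hxy.ne, not_lt_xy, not_lt_of_lt hxy⟩, ⟨hyz.ne, not_lt_yz, not_lt_of_lt hyz⟩⟩

section Reflection

variable {α : Type*} [LinearOrder α] {S : Finset α} {G : SimpleGraph α} {a b u v w : α}

def rankIn (S : Finset α) (v : α) : ℕ := #{u ∈ S | u < v}

theorem strictMonoOn_rankIn : StrictMonoOn (rankIn S) S := by
  intro u hu v _ huv
  refine card_lt_card ((ssubset_iff_of_subset fun x hx => ?_).2 ⟨u, ?_, ?_⟩)
  · simp only [mem_filter] at hx ⊢
    exact ⟨hx.1, hx.2.trans huv⟩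
  · exact mem_filter.2 ⟨hu, huv⟩
  · simp

def JoinsConsecutive (G : SimpleGraph α) (S : Finset α) : Prop :=
  ∀ a b, G.Adj a b → a < b → a ∈ S ∧ b ∈ S ∧ ∀ x ∈ S, ¬ (a < x ∧ x < b)

namespace JoinsConsecutive

variable (hG : JoinsConsecutive G S)
include hG

theorem mem_of_adj (h : G.Adj a b) : a ∈ S ∧ b ∈ S := by
  rcases h.ne.lt_or_gt with hab | hba
  · exact ⟨(hG a b h hab).1, (hG a b h hab).2.1⟩
  · exact ⟨(hG b a h.symm hba).2.1, (hG b a h.symm hba).1⟩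

theorem mem_of_reachable (hu : u ∈ S) (h : G.Reachable u v) : v ∈ S := by
  rw [SimpleGraph.reachable_iff_reflTransGen] at h
  induction h with
  | refl => exact hu
  | tail _ hadj _ => exact (hG.mem_of_adj hadj).2

theorem rankIn_eq_succ (h : G.Adj a b) (hab : a < b) : rankIn S b = rankIn S a + 1 := by
  obtain ⟨ha, -, hbetween⟩ := hG a b h hab
  have : ({u ∈ S | u < b} : Finset α) = insert a {u ∈ S | u < a} := by
    ext x
    simp only [mem_filter, mem_insert]
    constructor
    · rintro ⟨hx, hxb⟩
      rcases lt_trichotomy x a with hxa | rfl | hax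
      · exact Or.inr ⟨hx, hxa⟩
      · exact Or.inl rfl
      · exact absurd ⟨hax, hxb⟩ (hbetween x hx)
    · rintro (rfl | ⟨hx, hxa⟩)
      · exact ⟨ha, hab⟩
      · exact ⟨hx, hxa.trans hab⟩
  rw [rankIn, this, card_insert_of_notMem (by simp), rankIn]

theorem rankIn_eq_succ_or (h : G.Adj a b) :
    rankIn S b = rankIn S a + 1 ∨ rankIn S a = rankIn S b + 1 := by
  rcases h.ne.lt_or_gt with hab | hba
  · exact Or.inl (hG.rankIn_eq_succ h hab)
  · exact Or.inr (hG.rankIn_eq_succ h.symm hba)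

theorem exists_reachable_rankIn_eq (hv : v ∈ S) (hvw : G.Reachable v w) {m : ℕ}
    (hvm : rankIn S v ≤ m) (hmw : m ≤ rankIn S w) :
    ∃ u ∈ S, G.Reachable v u ∧ rankIn S u = m := by
  rw [SimpleGraph.reachable_iff_reflTransGen] at hvw
  induction hvw with
  | refl => exact ⟨v, hv, .refl v, by omega⟩
  | @tail b w hvb hbw ih =>
    by_cases hm : m = rankIn S w
    · refine ⟨w, (hG.mem_of_adj hbw).2, ?_, hm.symm⟩
      exact ((SimpleGraph.reachable_iff_reflTransGen v b).2 hvb).trans hbw.reachable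
    · rcases hG.rankIn_eq_succ_or hbw with h | h <;> exact ih (by omega)

theorem adj_of_rankIn_eq_succ (hvw : G.Reachable v w) (ha : a ∈ S) (hb : b ∈ S)
    (hab : rankIn S b = rankIn S a + 1) (hva : rankIn S v ≤ rankIn S a)
    (hbw : rankIn S b ≤ rankIn S w) : G.Adj a b := by
  rw [SimpleGraph.reachable_iff_reflTransGen] at hvw
  induction hvw with
  | refl => omega
  | @tail x w _ hxw ih =>
    obtain ⟨hx, hw⟩ := hG.mem_of_adj hxw
    rcases hG.rankIn_eq_succ_or hxw with h | h
    · by_cases hbx : rankIn S b ≤ rankIn S x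
      · exact ih hbx
      · obtain rfl : b = w := strictMonoOn_rankIn.injOn hb hw (by omega)
        obtain rfl : a = x := strictMonoOn_rankIn.injOn ha hx (by omega)
        exact hxw
    · exact ih (by omega)

end JoinsConsecutive

variable [Fintype α]

noncomputable def componentRanks (G : SimpleGraph α) (S : Finset α) (u : α) : Finset ℕ :=
  image (rankIn S) {v | G.Reachable u v}

theorem rankIn_mem_componentRanks (h : G.Reachable u v) : rankIn S v ∈ componentRanks G S u :=
  mem_image_of_mem _ (by simpa using h)

theorem componentRanks_nonempty : (componentRanks G S u).Nonempty :=
  ⟨_, rankIn_mem_componentRanks (.refl u)⟩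

theorem SimpleGraph.Reachable.componentRanks_eq (h : G.Reachable u v) :
    componentRanks G S u = componentRanks G S v := by
  have : ({w | G.Reachable u w} : Finset α) = ({w | G.Reachable v w} : Finset α) := by
    ext w
    simpa using ⟨h.symm.trans, h.trans⟩
  rw [componentRanks, componentRanks, this]

noncomputable def lowRank (G : SimpleGraph α) (S : Finset α) (u : α) : ℕ :=
  (componentRanks G S u).min' componentRanks_nonempty

noncomputable def highRank (G : SimpleGraph α) (S : Finset α) (u : α) : ℕ :=
  (componentRanks G S u).max' componentRanks_nonempty

theorem lowRank_le (h : G.Reachable u v) : lowRank G S u ≤ rankIn S v :=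
  min'_le _ _ (rankIn_mem_componentRanks h)

theorem le_highRank (h : G.Reachable u v) : rankIn S v ≤ highRank G S u :=
  le_max' _ _ (rankIn_mem_componentRanks h)

theorem exists_rankIn_eq_lowRank (u : α) :
    ∃ v, G.Reachable u v ∧ rankIn S v = lowRank G S u := by
  obtain ⟨v, hv, hrank⟩ := mem_image.1 (min'_mem (componentRanks G S u) componentRanks_nonempty)
  exact ⟨v, by simpa using hv, hrank⟩

theorem exists_rankIn_eq_highRank (u : α) :
    ∃ v, G.Reachable u v ∧ rankIn S v = highRank G S u := by
  obtain ⟨v, hv, hrank⟩ := mem_image.1 (max'_mem (componentRanks G S u) componentRanks_nonempty)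
  exact ⟨v, by simpa using hv, hrank⟩

theorem SimpleGraph.Reachable.lowRank_eq (h : G.Reachable u v) :
    lowRank G S u = lowRank G S v := by
  simp only [lowRank, h.componentRanks_eq]

theorem SimpleGraph.Reachable.highRank_eq (h : G.Reachable u v) :
    highRank G S u = highRank G S v := by
  simp only [highRank, h.componentRanks_eq]

/-- When every edge joins consecutive elements of `S`, the components of `G` inside `S` are paths,
and `reflect G S` turns each of them end to end. -/
noncomputable def reflect (G : SimpleGraph α) (S : Finset α) (u : α) : α :=
  if h : u ∈ S ∧ ∃ w ∈ S, G.Reachable u w ∧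
      rankIn S w = lowRank G S u + highRank G S u - rankIn S u then h.2.choose
  else u

theorem reflect_of_notMem (hu : u ∉ S) : reflect G S u = u := by
  simp [reflect, hu]

namespace JoinsConsecutive

variable (hG : JoinsConsecutive G S)
include hG

theorem reflect_spec (hu : u ∈ S) :
    reflect G S u ∈ S ∧ G.Reachable u (reflect G S u) ∧
      rankIn S (reflect G S u) = lowRank G S u + highRank G S u - rankIn S u := by
  have hex : ∃ w ∈ S, G.Reachable u w ∧
      rankIn S w = lowRank G S u + highRank G S u - rankIn S u := by
    obtain ⟨v, huv, hv⟩ := exists_rankIn_eq_lowRank (G := G) (S := S) u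
    obtain ⟨w, huw, hw⟩ := exists_rankIn_eq_highRank (G := G) (S := S) u
    have := lowRank_le (G := G) (S := S) (.refl u)
    have := le_highRank (G := G) (S := S) (.refl u)
    obtain ⟨x, hx, hvx, hxrank⟩ := hG.exists_reachable_rankIn_eq (hG.mem_of_reachable hu huv)
      (huv.symm.trans huw) (m := lowRank G S u + highRank G S u - rankIn S u) (by omega) (by omega)
    exact ⟨x, hx, huv.trans hvx, hxrank⟩
  rw [reflect, dif_pos ⟨hu, hex⟩]
  exact hex.choose_spec

theorem reflect_involutive : Function.Involutive (reflect G S) := by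
  intro u
  by_cases hu : u ∈ S
  · obtain ⟨hw, huw, hwrank⟩ := hG.reflect_spec hu
    obtain ⟨hw', -, hrank⟩ := hG.reflect_spec hw
    rw [← huw.lowRank_eq, ← huw.highRank_eq, hwrank] at hrank
    have := lowRank_le (G := G) (S := S) (.refl u)
    have := le_highRank (G := G) (S := S) (.refl u)
    exact strictMonoOn_rankIn.injOn hw' hu (by omega)
  · rw [reflect_of_notMem hu, reflect_of_notMem hu]

theorem reflect_lt_and_adj (h : G.Adj a b) (hab : a < b) :
    reflect G S b < reflect G S a ∧ G.Adj (reflect G S b) (reflect G S a) := by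
  obtain ⟨ha, hb⟩ := hG.mem_of_adj h
  obtain ⟨ha', hra, hranka⟩ := hG.reflect_spec ha
  obtain ⟨hb', hrb, hrankb⟩ := hG.reflect_spec hb
  rw [← h.reachable.lowRank_eq, ← h.reachable.highRank_eq] at hrankb
  have := hG.rankIn_eq_succ h hab
  have := lowRank_le (G := G) (S := S) (.refl a)
  have := le_highRank (G := G) (S := S) h.reachable
  have hsucc : rankIn S (reflect G S a) = rankIn S (reflect G S b) + 1 := by omega
  exact ⟨(strictMonoOn_rankIn.lt_iff_lt hb' ha').1 (by omega),
    hG.adj_of_rankIn_eq_succ (hrb.symm.trans (h.symm.reachable.trans hra)) hb' ha' hsucc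
      le_rfl le_rfl⟩

theorem reflect_adj (h : G.Adj a b) : G.Adj (reflect G S a) (reflect G S b) := by
  rcases h.ne.lt_or_gt with hab | hba
  · exact (hG.reflect_lt_and_adj h hab).2.symm
  · exact (hG.reflect_lt_and_adj h.symm hba).2

end JoinsConsecutive

noncomputable def reflectPair (G : SimpleGraph α) (S : Finset α) (p : α × α) : α × α :=
  if G.Adj p.1 p.2 then (reflect G S p.2, reflect G S p.1) else p

theorem JoinsConsecutive.reflectPair_involutive (hG : JoinsConsecutive G S) :
    Function.Involutive (reflectPair G S) := by
  rintro ⟨a, b⟩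
  by_cases h : G.Adj a b
  · have h' : G.Adj (reflect G S b) (reflect G S a) := hG.reflect_adj h.symm
    simp only [reflectPair, if_pos h, if_pos h', hG.reflect_involutive a,
      hG.reflect_involutive b]
  · simp only [reflectPair, if_neg h]

end Reflection

section SwapColors

variable {n N : ℕ}

def incGraphOn (lt : Fin n → Fin n → Prop) (S : Finset (Fin n)) : SimpleGraph (Fin n) where
  Adj a b := Incomp lt a b ∧ a ∈ S ∧ b ∈ S
  symm := ⟨fun _ _ h => ⟨h.1.symm, h.2.2, h.2.1⟩⟩
  loopless := ⟨fun _ h => h.1.1 rfl⟩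

theorem incGraphOn_adj {lt : Fin n → Fin n → Prop} {S : Finset (Fin n)} {a b : Fin n} :
    (incGraphOn lt S).Adj a b ↔ Incomp lt a b ∧ a ∈ S ∧ b ∈ S :=
  Iff.rfl

def twoColored (c : Fin n → Fin N) (k k' : Fin N) : Finset (Fin n) := {v | c v = k ∨ c v = k'}

theorem mem_twoColored {c : Fin n → Fin N} {k k' : Fin N} {v : Fin n} :
    v ∈ twoColored c k k' ↔ c v = k ∨ c v = k' := by
  simp [twoColored]

theorem swap_apply_eq_of_ne_of_mem_pair {β : Type*} [DecidableEq β] {k k' x y : β}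
    (hx : x = k ∨ x = k') (hy : y = k ∨ y = k') (hxy : x ≠ y) : Equiv.swap k k' x = y := by
  rcases hx with rfl | rfl <;> rcases hy with rfl | rfl <;> simp_all

noncomputable def swapColors (lt : Fin n → Fin n → Prop) (c : Fin n → Fin N) (k k' : Fin N) :
    Fin n → Fin N :=
  fun v => Equiv.swap k k' (c (reflect (incGraphOn lt (twoColored c k k')) (twoColored c k k') v))

noncomputable def ascentPairs (lt : Fin n → Fin n → Prop) (c : Fin n → Fin N) :
    Finset (Fin n × Fin n) :=
  {p | p.1 < p.2 ∧ Incomp lt p.1 p.2 ∧ (c p.1 : ℕ) < c p.2}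

theorem ascC_eq_card_ascentPairs (lt : Fin n → Fin n → Prop) (c : Fin n → Fin N) :
    ascC lt c = #(ascentPairs lt c) :=
  rfl

theorem ne_of_mem_twoColored_of_notMem {c : Fin n → Fin N} {k k' : Fin N} {a b : Fin n}
    (ha : a ∈ twoColored c k k') (hb : b ∉ twoColored c k k') : c a ≠ c b :=
  fun h => hb (by rw [mem_twoColored, ← h]; exact mem_twoColored.1 ha)

variable {P : NUIO n} {c : Fin n → Fin N} {k k' : Fin N} {a b v : Fin n}

theorem swapColors_of_notMem (hv : v ∉ twoColored c k k') : swapColors P.lt c k k' v = c v := by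
  rw [swapColors, reflect_of_notMem hv]
  rw [mem_twoColored, not_or] at hv
  exact Equiv.swap_apply_of_ne_of_ne hv.1 hv.2

theorem val_lt_iff_of_adjacent (hk' : (k' : ℕ) = k + 1) {x y d : Fin N}
    (hx : x = k ∨ x = k') (hy : y = k ∨ y = k') (hd : ¬ (d = k ∨ d = k')) :
    ((x : ℕ) < d ↔ (y : ℕ) < d) ∧ ((d : ℕ) < x ↔ (d : ℕ) < y) := by
  simp only [not_or, Fin.ext_iff] at hd
  rcases hx with rfl | rfl <;> rcases hy with rfl | rfl <;> omega

variable (hc : ∀ a b, Incomp P.lt a b → c a ≠ c b)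
include hc

theorem joinsConsecutive_incGraphOn_twoColored :
    JoinsConsecutive (incGraphOn P.lt (twoColored c k k')) (twoColored c k k') := by
  intro a b h _
  obtain ⟨hab, ha, hb⟩ := incGraphOn_adj.1 h
  refine ⟨ha, hb, fun x hx ⟨hax, hxb⟩ => ?_⟩
  obtain ⟨hax', hxb'⟩ := P.incomp_of_lt_of_lt hax hxb hab
  have := hc _ _ hab
  have := hc _ _ hax'
  have := hc _ _ hxb'
  rw [mem_twoColored] at ha hb hx
  rcases ha with h | h <;> rcases hb with h' | h' <;> rcases hx with h'' | h'' <;> simp_all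

theorem twoColored_swapColors : twoColored (swapColors P.lt c k k') k k' = twoColored c k k' := by
  ext v
  by_cases hv : v ∈ twoColored c k k'
  · have hr := mem_twoColored.1 ((joinsConsecutive_incGraphOn_twoColored hc).reflect_spec hv).1
    simp only [hv, iff_true, mem_twoColored, swapColors]
    rcases hr with h | h <;>
      simp only [h, Equiv.swap_apply_left, Equiv.swap_apply_right, or_true, true_or]
  · rw [mem_twoColored, swapColors_of_notMem hv, ← mem_twoColored]

theorem swapColors_eq_of_adj (h : (incGraphOn P.lt (twoColored c k k')).Adj a b) :
    swapColors P.lt c k k' a =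
      c (reflect (incGraphOn P.lt (twoColored c k k')) (twoColored c k k') b) := by
  obtain ⟨hinc, ha, hb⟩ :=
    incGraphOn_adj.1 ((joinsConsecutive_incGraphOn_twoColored hc).reflect_adj h)
  exact swap_apply_eq_of_ne_of_mem_pair (mem_twoColored.1 ha) (mem_twoColored.1 hb) (hc _ _ hinc)

theorem swapColors_proper :
    ∀ a b, Incomp P.lt a b → swapColors P.lt c k k' a ≠ swapColors P.lt c k k' b := by
  intro a b hab
  by_cases ha : a ∈ twoColored c k k' <;> by_cases hb : b ∈ twoColored c k k'
  · have h : (incGraphOn P.lt (twoColored c k k')).Adj a b := ⟨hab, ha, hb⟩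
    rw [swapColors_eq_of_adj hc h, swapColors_eq_of_adj hc h.symm]
    have := (joinsConsecutive_incGraphOn_twoColored hc).reflect_adj h.symm
    exact hc _ _ (incGraphOn_adj.1 this).1
  · exact ne_of_mem_twoColored_of_notMem (by rwa [twoColored_swapColors hc])
      (by rwa [twoColored_swapColors hc])
  · exact (ne_of_mem_twoColored_of_notMem (by rwa [twoColored_swapColors hc])
      (by rwa [twoColored_swapColors hc])).symm
  · rw [swapColors_of_notMem ha, swapColors_of_notMem hb]
    exact hc _ _ hab

theorem swapColors_swapColors : swapColors P.lt (swapColors P.lt c k k') k k' = c := by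
  funext v
  rw [swapColors, twoColored_swapColors hc, swapColors,
    (joinsConsecutive_incGraphOn_twoColored hc).reflect_involutive, Equiv.swap_apply_self]

theorem prod_swapColors {M : Type*} [CommMonoid M] (f : Fin N → M) :
    ∏ v, f (swapColors P.lt c k k' v) = ∏ v, f (Equiv.swap k k' (c v)) :=
  Equiv.prod_comp
    ((joinsConsecutive_incGraphOn_twoColored (k := k) (k' := k') hc).reflect_involutive.toPerm _)
    fun v => f (Equiv.swap k k' (c v))

theorem reflectPair_mem_ascentPairs (hk' : (k' : ℕ) = k + 1) {p : Fin n × Fin n}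
    (hp : p ∈ ascentPairs P.lt (swapColors P.lt c k k')) :
    reflectPair (incGraphOn P.lt (twoColored c k k')) (twoColored c k k') p ∈
      ascentPairs P.lt c := by
  obtain ⟨a, b⟩ := p
  simp only [ascentPairs, mem_filter, mem_univ, true_and] at hp ⊢
  obtain ⟨hab, hinc, hasc⟩ := hp
  by_cases h : (incGraphOn P.lt (twoColored c k k')).Adj a b
  · rw [swapColors_eq_of_adj hc h, swapColors_eq_of_adj hc h.symm] at hasc
    obtain ⟨hlt, hadj⟩ := (joinsConsecutive_incGraphOn_twoColored hc).reflect_lt_and_adj h hab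
    rw [reflectPair, if_pos h]
    exact ⟨hlt, (incGraphOn_adj.1 hadj).1, hasc⟩
  rw [reflectPair, if_neg h]
  refine ⟨hab, hinc, ?_⟩
  have mem_pair {v : Fin n} (hv : v ∈ twoColored c k k') :
      swapColors P.lt c k k' v = k ∨ swapColors P.lt c k k' v = k' := by
    rwa [← mem_twoColored, twoColored_swapColors hc]
  by_cases ha : a ∈ twoColored c k k' <;> by_cases hb : b ∈ twoColored c k k'
  · exact absurd (incGraphOn_adj.2 ⟨hinc, ha, hb⟩) h
  · rw [swapColors_of_notMem hb] at hasc
    exact (val_lt_iff_of_adjacent hk' (mem_pair ha) (mem_twoColored.1 ha)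
      (mem_twoColored.not.1 hb)).1.1 hasc
  · rw [swapColors_of_notMem ha] at hasc
    exact (val_lt_iff_of_adjacent hk' (mem_pair hb) (mem_twoColored.1 hb)
      (mem_twoColored.not.1 ha)).2.1 hasc
  · rwa [swapColors_of_notMem ha, swapColors_of_notMem hb] at hasc

theorem ascC_swapColors (hk' : (k' : ℕ) = k + 1) :
    ascC P.lt (swapColors P.lt c k k') = ascC P.lt c := by
  have hinv :=
    (joinsConsecutive_incGraphOn_twoColored (k := k) (k' := k') hc).reflectPair_involutive
  rw [ascC_eq_card_ascentPairs, ascC_eq_card_ascentPairs]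
  refine card_nbij' _ _ (fun p hp => reflectPair_mem_ascentPairs hc hk' hp) (fun p hp => ?_)
    (fun p _ => hinv p) (fun p _ => hinv p)
  have := reflectPair_mem_ascentPairs (swapColors_proper (k := k) (k' := k') hc) hk' (p := p)
  rw [swapColors_swapColors hc, twoColored_swapColors hc] at this
  exact this hp

end SwapColors

theorem coeff_chromIncQSym {n N : ℕ} (lt : Fin n → Fin n → Prop) (j : ℕ) :
    (chromIncQSym N n lt).coeff j =
      ∑ c ∈ {c : Fin n → Fin N | ∀ a b, Incomp lt a b → c a ≠ c b},
        if j = ascC lt c then ∏ i, MvPolynomial.X (c i) else 0 := by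
  rw [chromIncQSym, Polynomial.finsetSum_coeff]
  refine sum_congr rfl fun c _ => ?_
  rw [mul_comm, Polynomial.coeff_C_mul_X_pow]

theorem rename_swap_coeff_chromIncQSym {n N : ℕ} (P : NUIO n) {k k' : Fin N}
    (hk' : (k' : ℕ) = k + 1) (j : ℕ) :
    MvPolynomial.rename (Equiv.swap k k') ((chromIncQSym N n P.lt).coeff j) =
      (chromIncQSym N n P.lt).coeff j := by
  rw [coeff_chromIncQSym, map_sum]
  refine sum_nbij' (swapColors P.lt · k k') (swapColors P.lt · k k') ?_ ?_ ?_ ?_ ?_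
  all_goals simp only [mem_filter, mem_univ, true_and]
  · exact fun c hc => swapColors_proper hc
  · exact fun c hc => swapColors_proper hc
  · exact fun c hc => swapColors_swapColors hc
  · exact fun c hc => swapColors_swapColors hc
  · intro c hc
    rw [ascC_swapColors hc hk', prod_swapColors hc, apply_ite (MvPolynomial.rename _), map_zero,
      map_prod]
    simp only [MvPolynomial.rename_X]

theorem MvPolynomial.rename_eq_self_of_adjacent_swaps {R : Type*} [CommSemiring R] {m : ℕ}
    {p : MvPolynomial (Fin (m + 1)) R}
    (h : ∀ i : Fin m, rename (Equiv.swap i.castSucc i.succ) p = p)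
    (τ : Equiv.Perm (Fin (m + 1))) :
    rename τ p = p := by
  have hτ : τ ∈ Submonoid.closure (Set.range fun i : Fin m => Equiv.swap i.castSucc i.succ) :=
    Equiv.Perm.mclosure_swap_castSucc_succ m ▸ Submonoid.mem_top τ
  induction hτ using Submonoid.closure_induction with
  | one => exact rename_id_apply p
  | mem σ hσ =>
    obtain ⟨i, rfl⟩ := hσ
    exact h i
  | mul σ₁ σ₂ _ _ ih₁ ih₂ =>
    rw [Equiv.Perm.coe_mul, ← rename_rename, ih₂, ih₁]

/-- for a natural unit interval order `P` on `[n]`, the chromatic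
quasisymmetric polynomial `X_{inc(P)}(x_1,…,x_N;t)` is symmetric in `x_1,…,x_N`:
each coefficient of `t^j` is invariant under every permutation of the variables. -/
theorem chromatic_qsym_symmetric (n N : ℕ) (hN : 1 ≤ N) (P : NUIO n) :
    ∀ (τ : Equiv.Perm (Fin N)) (j : ℕ),
      MvPolynomial.rename (τ : Fin N → Fin N) ((chromIncQSym N n P.lt).coeff j) =
        (chromIncQSym N n P.lt).coeff j := by
  intro τ j
  obtain ⟨m, rfl⟩ : ∃ m, N = m + 1 := ⟨N - 1, by omega⟩
  exact MvPolynomial.rename_eq_self_of_adjacent_swaps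
    (fun i => rename_swap_coeff_chromIncQSym P (by simp) j) τ
end
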